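/- arXiv:2509.12921 — 6 statements merged into one kernel-verified Lean document; each statement's English description precedes it below -/
import Mathlib

section
/- Fix an integer d ≥ 1 and a constant C > 0, and define H(x,R) = ∫_{B(x,R)} ‖y‖ e^{−‖y‖²/C} dy for x ∈ ℝ^d and R > 0. Then there exists a constant C' depending only on d and C such that for every R ≥ 1, ∑_{k=0}^∞ max(k^{d−1}, 1) · sup_{x ∈ S_k} H(x,R) ≤ C' R^d. -/
/-!
Split `‖y‖ e^{-‖y‖²/C} = e^{-‖y‖²/(2C)} · ‖y‖ e^{-‖y‖²/(2C)}`. Every ball integral is at most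
the total integral `M` of the integrable function `‖y‖ e^{-‖y‖²/C}`, which handles the `O(R)`
annuli with `k < 2R`, each of weight at most `(2R)^{d-1}`. For `k ≥ 2R` every point of
`B(x, R)`, `x ∈ S_k`, has norm at least `k/2`, so the first factor is at most `e^{-k²/(8C)}`
and the weighted tail sum converges to a constant independent of `R`.
-/

open MeasureTheory

lemma Real.le_one_add_inv_mul_exp_mul_sq {a : ℝ} (ha : 0 < a) (r : ℝ) :
    r ≤ (1 + a⁻¹) * Real.exp (a * r ^ 2) := by
  have hpoly : r ≤ (1 + a⁻¹) * (a * r ^ 2 + 1) := by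
    field_simp
    nlinarith [sq_nonneg (r - 1), sq_nonneg r, sq_nonneg (a * r), mul_pos ha ha]
  exact hpoly.trans (by gcongr; exact Real.add_one_le_exp _)

lemma mul_exp_neg_sq_div_le {C a r : ℝ} (hC : 0 < C) (ha : 0 ≤ a) (har : a ≤ r) :
    r * Real.exp (-r ^ 2 / C) ≤
      Real.exp (-a ^ 2 / (2 * C)) * (r * Real.exp (-r ^ 2 / (2 * C))) := by
  have hr : 0 ≤ r := ha.trans har
  have hdecay : Real.exp (-r ^ 2 / (2 * C)) ≤ Real.exp (-a ^ 2 / (2 * C)) := by gcongr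
  calc r * Real.exp (-r ^ 2 / C)
      = Real.exp (-r ^ 2 / (2 * C)) * (r * Real.exp (-r ^ 2 / (2 * C))) := by
        rw [mul_left_comm, ← Real.exp_add]; congr 2; ring
    _ ≤ Real.exp (-a ^ 2 / (2 * C)) * (r * Real.exp (-r ^ 2 / (2 * C))) := by gcongr

lemma summable_max_pow_one_mul_exp_neg_sq_div (n : ℕ) {c : ℝ} (hc : 0 < c) :
    Summable fun k : ℕ => max ((k : ℝ) ^ n) 1 * Real.exp (-k ^ 2 / c) := by
  have hpow := Real.summable_pow_mul_exp_neg_nat_mul n (inv_pos.2 hc)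
  have hone := Real.summable_pow_mul_exp_neg_nat_mul 0 (inv_pos.2 hc)
  refine (hpow.add hone).of_nonneg_of_le (fun k => by positivity) fun k => ?_
  have hk : (k : ℝ) ≤ k ^ 2 := by
    rcases Nat.eq_zero_or_pos k with rfl | hk
    · simp
    · nlinarith [(Nat.one_le_cast (α := ℝ)).2 hk]
  have hexp : Real.exp (-k ^ 2 / c) ≤ Real.exp (-c⁻¹ * k) := by
    rw [neg_div, div_eq_inv_mul, ← neg_mul, neg_mul, neg_mul]
    gcongr
  rw [pow_zero, ← add_mul]
  exact mul_le_mul (max_le_add_of_nonneg (by positivity) zero_le_one) hexp (by positivity)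
    (by positivity)

lemma tsum_le_card_mul_add_tsum {f b : ℕ → ℝ} {N : ℕ} {A : ℝ} (hf : ∀ k, 0 ≤ f k)
    (hb0 : ∀ k, 0 ≤ b k) (hb : Summable b) (hlt : ∀ k < N, f k ≤ A)
    (hge : ∀ k, N ≤ k → f k ≤ b k) : ∑' k, f k ≤ N * A + ∑' k, b k := by
  have hfb : ∀ k, f (k + N) ≤ b (k + N) := fun k => hge _ (by omega)
  have hbN : Summable (fun k => b (k + N)) := (summable_nat_add_iff N).2 hb
  have hfN : Summable (fun k => f (k + N)) := hbN.of_nonneg_of_le (fun k => hf _) hfb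
  rw [← ((summable_nat_add_iff N).1 hfN).sum_add_tsum_nat_add N, ← hb.sum_add_tsum_nat_add N]
  have hhead : ∑ k ∈ Finset.range N, f k ≤ N * A := by
    simpa using Finset.sum_le_card_nsmul _ _ _ fun k hk => hlt k (Finset.mem_range.1 hk)
  have htail : ∑' k, f (k + N) ≤ ∑' k, b (k + N) := hfN.tsum_le_tsum hfb hbN
  have hbhead : 0 ≤ ∑ k ∈ Finset.range N, b k := Finset.sum_nonneg fun k _ => hb0 k
  linarith

lemma Real.biSup_le {α : Type*} {s : Set α} {f : α → ℝ} {a : ℝ} (ha : 0 ≤ a)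
    (h : ∀ x ∈ s, f x ≤ a) : ⨆ x ∈ s, f x ≤ a :=
  Real.iSup_le (fun x => Real.iSup_le (h x) ha) ha

lemma biSup_setIntegral_ball_nonneg {V : Type*} [SeminormedAddCommGroup V] [MeasurableSpace V]
    [OpensMeasurableSpace V] {μ : Measure V} {C R : ℝ} (s : Set V) :
    0 ≤ ⨆ x ∈ s, ∫ y in Metric.ball x R, ‖y‖ * Real.exp (-‖y‖ ^ 2 / C) ∂μ :=
  Real.iSup_nonneg fun x => Real.iSup_nonneg fun _ =>
    setIntegral_nonneg measurableSet_ball fun y _ => by positivity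

section Gaussian

variable {V : Type*} [NormedAddCommGroup V] [InnerProductSpace ℝ V] [FiniteDimensional ℝ V]
  [MeasurableSpace V] [BorelSpace V]

lemma integrable_exp_neg_mul_sq_norm {b : ℝ} (hb : 0 < b) :
    Integrable fun v : V => Real.exp (-b * ‖v‖ ^ 2) :=
  Integrable.of_integral_ne_zero <| by
    rw [GaussianFourier.integral_rexp_neg_mul_sq_norm hb]; positivity

lemma integrable_norm_mul_exp_neg_sq_norm_div {C : ℝ} (hC : 0 < C) :
    Integrable fun v : V => ‖v‖ * Real.exp (-‖v‖ ^ 2 / C) := by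
  refine ((integrable_exp_neg_mul_sq_norm (V := V) (b := (2 * C)⁻¹) (by positivity)).const_mul
    (1 + 2 * C)).mono' (by fun_prop) (Filter.Eventually.of_forall fun v => ?_)
  have h := Real.le_one_add_inv_mul_exp_mul_sq (a := (2 * C)⁻¹) (by positivity) ‖v‖
  rw [inv_inv] at h
  rw [Real.norm_of_nonneg (by positivity)]
  calc ‖v‖ * Real.exp (-‖v‖ ^ 2 / C)
      ≤ (1 + 2 * C) * Real.exp ((2 * C)⁻¹ * ‖v‖ ^ 2) * Real.exp (-‖v‖ ^ 2 / C) := by gcongr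
    _ = (1 + 2 * C) * Real.exp (-(2 * C)⁻¹ * ‖v‖ ^ 2) := by
      rw [mul_assoc, ← Real.exp_add]; congr 2; field_simp; ring

lemma biSup_setIntegral_ball_le_integral {C R : ℝ} (hC : 0 < C) (s : Set V) :
    ⨆ x ∈ s, ∫ y in Metric.ball x R, ‖y‖ * Real.exp (-‖y‖ ^ 2 / C) ≤
      ∫ y : V, ‖y‖ * Real.exp (-‖y‖ ^ 2 / C) :=
  Real.biSup_le (integral_nonneg fun y => by positivity) fun x _ =>
    setIntegral_le_integral (integrable_norm_mul_exp_neg_sq_norm_div hC)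
      (Filter.Eventually.of_forall fun y => by positivity)

lemma setIntegral_ball_le_exp_mul_integral {C a R : ℝ} (hC : 0 < C) (ha : 0 ≤ a)
    {x : V} (hx : a + R ≤ ‖x‖) :
    ∫ y in Metric.ball x R, ‖y‖ * Real.exp (-‖y‖ ^ 2 / C) ≤
      Real.exp (-a ^ 2 / (2 * C)) * ∫ y : V, ‖y‖ * Real.exp (-‖y‖ ^ 2 / (2 * C)) := by
  have hψ := (integrable_norm_mul_exp_neg_sq_norm_div (V := V)
    (by positivity : 0 < 2 * C)).const_mul (Real.exp (-a ^ 2 / (2 * C)))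
  have hfar : ∀ y ∈ Metric.ball x R, a ≤ ‖y‖ := fun y hy => by
    have := norm_sub_norm_le x y
    rw [← dist_eq_norm, dist_comm] at this
    linarith [Metric.mem_ball.1 hy]
  calc ∫ y in Metric.ball x R, ‖y‖ * Real.exp (-‖y‖ ^ 2 / C)
      ≤ ∫ y in Metric.ball x R,
          Real.exp (-a ^ 2 / (2 * C)) * (‖y‖ * Real.exp (-‖y‖ ^ 2 / (2 * C))) :=
        setIntegral_mono_on (integrable_norm_mul_exp_neg_sq_norm_div (V := V) hC).integrableOn
          hψ.integrableOn measurableSet_ball fun y hy => mul_exp_neg_sq_div_le hC ha (hfar y hy)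
    _ ≤ ∫ y : V, Real.exp (-a ^ 2 / (2 * C)) * (‖y‖ * Real.exp (-‖y‖ ^ 2 / (2 * C))) :=
        setIntegral_le_integral hψ (Filter.Eventually.of_forall fun y => by positivity)
    _ = _ := integral_const_mul _ _

lemma biSup_setIntegral_ball_le_exp_mul_integral {C R r : ℝ} (hC : 0 < C) (hR : 0 ≤ R)
    (hr : 2 * R ≤ r) {s : Set V} (hs : ∀ x ∈ s, r ≤ ‖x‖) :
    ⨆ x ∈ s, ∫ y in Metric.ball x R, ‖y‖ * Real.exp (-‖y‖ ^ 2 / C) ≤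
      (∫ y : V, ‖y‖ * Real.exp (-‖y‖ ^ 2 / (2 * C))) * Real.exp (-r ^ 2 / (8 * C)) := by
  refine Real.biSup_le (by positivity) fun x hx => ?_
  calc _ ≤ Real.exp (-(r / 2) ^ 2 / (2 * C)) * ∫ y : V, ‖y‖ * Real.exp (-‖y‖ ^ 2 / (2 * C)) :=
        setIntegral_ball_le_exp_mul_integral hC (by linarith) (by linarith [hs x hx])
    _ = _ := by rw [mul_comm]; congr 2; field_simp; ring

end Gaussian

/-- With `H(x,R) = ∫_{B(x,R)} ‖y‖ e^{−‖y‖²/C} dy` and annuli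
`S_k = B(0,k+1) \ B(0,k)` (so `S_0 = B(0,1)`), there is a constant `C'`
(depending only on `d` and `C`) such that for every `R ≥ 1`,
`∑_{k=0}^∞ max(k^{d−1},1) · sup_{x ∈ S_k} H(x,R) ≤ C' R^d`. -/
theorem stmt_1 (d : ℕ) (hd : 1 ≤ d) (C : ℝ) (hC : 0 < C) :
    ∃ C' : ℝ, 0 < C' ∧ ∀ R : ℝ, 1 ≤ R →
      (∑' k : ℕ, max ((k : ℝ) ^ (d - 1)) 1 *
        ⨆ x ∈ (Metric.ball (0 : EuclideanSpace ℝ (Fin d)) (k + 1) \ Metric.ball 0 k),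
          ∫ y in Metric.ball x R, ‖y‖ * Real.exp (-‖y‖ ^ 2 / C)) ≤ C' * R ^ d := by
  set M := ∫ y : EuclideanSpace ℝ (Fin d), ‖y‖ * Real.exp (-‖y‖ ^ 2 / C)
  set M₂ := ∫ y : EuclideanSpace ℝ (Fin d), ‖y‖ * Real.exp (-‖y‖ ^ 2 / (2 * C))
  have hS := summable_max_pow_one_mul_exp_neg_sq_div (d - 1) (by positivity : 0 < 8 * C)
  set S := ∑' k : ℕ, max ((k : ℝ) ^ (d - 1)) 1 * Real.exp (-k ^ 2 / (8 * C))
  have hM : 0 ≤ M := integral_nonneg fun y => by positivity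
  have hM₂ : 0 ≤ M₂ := integral_nonneg fun y => by positivity
  have hS0 : 0 ≤ S := tsum_nonneg fun k => by positivity
  refine ⟨3 * 2 ^ (d - 1) * M + M₂ * S + 1, by positivity, fun R hR => ?_⟩
  have hceil : (⌈2 * R⌉₊ : ℝ) ≤ 3 * R := by
    linarith [Nat.ceil_lt_add_one (by positivity : (0 : ℝ) ≤ 2 * R)]
  have hRd : R * R ^ (d - 1) = R ^ d := by rw [← pow_succ', Nat.sub_add_cancel hd]
  calc _ ≤ ⌈2 * R⌉₊ * ((2 * R) ^ (d - 1) * M) +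
        ∑' k : ℕ, M₂ * (max ((k : ℝ) ^ (d - 1)) 1 * Real.exp (-k ^ 2 / (8 * C))) := by
        refine tsum_le_card_mul_add_tsum
          (fun k => mul_nonneg (by positivity) (biSup_setIntegral_ball_nonneg _))
          (fun k => by positivity) (hS.mul_left M₂) (fun k hk => ?_) (fun k hk => ?_)
        · have hk : (k : ℝ) ≤ 2 * R := (Nat.lt_ceil.1 hk).le
          exact mul_le_mul (max_le (by gcongr) (one_le_pow₀ (by linarith)))
            (biSup_setIntegral_ball_le_integral hC _) (biSup_setIntegral_ball_nonneg _)
            (by positivity)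
        · rw [mul_left_comm]
          exact mul_le_mul_of_nonneg_left (biSup_setIntegral_ball_le_exp_mul_integral hC
            (by linarith) (Nat.ceil_le.1 hk) fun x hx => by simpa using hx.2) (by positivity)
    _ ≤ 3 * R * ((2 * R) ^ (d - 1) * M) + M₂ * S := by rw [tsum_mul_left]; gcongr
    _ = 3 * 2 ^ (d - 1) * M * R ^ d + M₂ * S := by rw [mul_pow, ← hRd]; ring
    _ ≤ (3 * 2 ^ (d - 1) * M + M₂ * S + 1) * R ^ d := by
        nlinarith [mul_le_mul_of_nonneg_left (one_le_pow₀ hR : 1 ≤ R ^ d) (mul_nonneg hM₂ hS0),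
          pow_nonneg (by linarith : (0 : ℝ) ≤ R) d]
end

section
/- Let d ≥ 1 be an integer, a > 0 and ε > 0. There exists a constant M depending only on a, ε and d such that for all real numbers τ < s < t and all x, ξ ∈ ℝ^d, ∫_{ℝ^d} [(t−s)(s−τ)]^{−d/2} exp(−a‖x−η‖²/(t−s) − a‖η−ξ‖²/(s−τ)) dη ≤ M (t−τ)^{−d/2} exp(−a(1−ε)‖x−ξ‖²/(t−τ)). -/
open MeasureTheory

lemma complete_sq {E : Type*} [NormedAddCommGroup E] [InnerProductSpace ℝ E]
    (α β : ℝ) (hα : 0 < α) (hβ : 0 < β) (x ξ η : E) :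
    α * ‖x - η‖ ^ 2 + β * ‖η - ξ‖ ^ 2 =
      (α + β) * ‖η - ((α / (α + β)) • x + (β / (α + β)) • ξ)‖ ^ 2
        + (α * β / (α + β)) * ‖x - ξ‖ ^ 2 := by
  have hAB : α + β ≠ 0 := by positivity
  simp only [← real_inner_self_eq_norm_sq, inner_sub_left, inner_sub_right,
    inner_add_left, inner_add_right, real_inner_smul_left, real_inner_smul_right,
    real_inner_comm x η, real_inner_comm ξ η, real_inner_comm ξ x]
  field_simp
  ring

/-- For integer `d ≥ 1`, `a > 0`, `ε > 0`, there is `M`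
(depending only on `a`, `ε`, `d`) such that for all `τ < s < t` and all
`x, ξ ∈ ℝ^d`,
`∫_{ℝ^d} [(t−s)(s−τ)]^{−d/2} exp(−a‖x−η‖²/(t−s) − a‖η−ξ‖²/(s−τ)) dη
  ≤ M (t−τ)^{−d/2} exp(−a(1−ε)‖x−ξ‖²/(t−τ))`. -/
theorem stmt_3 (d : ℕ) (hd : 1 ≤ d) (a ε : ℝ) (ha : 0 < a) (hε : 0 < ε) :
    ∃ M : ℝ, 0 < M ∧ ∀ τ s t : ℝ, τ < s → s < t →
      ∀ x ξ : EuclideanSpace ℝ (Fin d),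
        (∫ η : EuclideanSpace ℝ (Fin d),
            ((t - s) * (s - τ)) ^ (-(d : ℝ) / 2) *
              Real.exp (-a * ‖x - η‖ ^ 2 / (t - s) - a * ‖η - ξ‖ ^ 2 / (s - τ))) ≤
          M * (t - τ) ^ (-(d : ℝ) / 2) *
            Real.exp (-a * (1 - ε) * ‖x - ξ‖ ^ 2 / (t - τ)) := by
  refine ⟨(Real.pi / a) ^ ((d : ℝ) / 2), by positivity, ?_⟩
  intro τ s t hτs hst x ξ
  have hu : 0 < t - s := sub_pos.2 hst
  have hv : 0 < s - τ := sub_pos.2 hτs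
  have hw : 0 < t - τ := by linarith
  set α := a / (t - s) with hα
  set β := a / (s - τ) with hβ
  have hα0 : 0 < α := by positivity
  have hβ0 : 0 < β := by positivity
  have hA : 0 < α + β := by positivity
  set c : EuclideanSpace ℝ (Fin d) := (α / (α + β)) • x + (β / (α + β)) • ξ with hc
  have hγ : α * β / (α + β) = a / (t - τ) := by
    rw [hα, hβ]
    rw [div_eq_div_iff (by positivity) hw.ne']
    field_simp
    ring
  have hexp : ∀ η : EuclideanSpace ℝ (Fin d),
      Real.exp (-a * ‖x - η‖ ^ 2 / (t - s) - a * ‖η - ξ‖ ^ 2 / (s - τ)) =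
        Real.exp (-(a / (t - τ)) * ‖x - ξ‖ ^ 2) * Real.exp (-(α + β) * ‖η - c‖ ^ 2) := by
    intro η
    rw [← Real.exp_add]
    congr 1
    have h1 : -a * ‖x - η‖ ^ 2 / (t - s) - a * ‖η - ξ‖ ^ 2 / (s - τ)
        = -(α * ‖x - η‖ ^ 2 + β * ‖η - ξ‖ ^ 2) := by
      rw [hα, hβ]; field_simp; ring
    rw [h1, complete_sq α β hα0 hβ0 x ξ η, hγ]
    ring
  have hint : (∫ η : EuclideanSpace ℝ (Fin d),
        ((t - s) * (s - τ)) ^ (-(d : ℝ) / 2) *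
          Real.exp (-a * ‖x - η‖ ^ 2 / (t - s) - a * ‖η - ξ‖ ^ 2 / (s - τ)))
      = (((t - s) * (s - τ)) ^ (-(d : ℝ) / 2) * Real.exp (-(a / (t - τ)) * ‖x - ξ‖ ^ 2)) *
          (Real.pi / (α + β)) ^ ((d : ℝ) / 2) := by
    simp_rw [hexp, ← mul_assoc]
    rw [MeasureTheory.integral_const_mul]
    congr 1
    have : (∫ η : EuclideanSpace ℝ (Fin d), Real.exp (-(α + β) * ‖η - c‖ ^ 2))
        = ∫ η : EuclideanSpace ℝ (Fin d), Real.exp (-(α + β) * ‖η‖ ^ 2) :=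
      integral_sub_right_eq_self (fun η => Real.exp (-(α + β) * ‖η‖ ^ 2)) c
    rw [this, GaussianFourier.integral_rexp_neg_mul_sq_norm hA]
    simp [finrank_euclideanSpace_fin]
  rw [hint]
  have hconst : ((t - s) * (s - τ)) ^ (-(d : ℝ) / 2) * (Real.pi / (α + β)) ^ ((d : ℝ) / 2)
      = (Real.pi / a) ^ ((d : ℝ) / 2) * (t - τ) ^ (-(d : ℝ) / 2) := by
    have huv : 0 < (t - s) * (s - τ) := by positivity
    have h2 : Real.pi / (α + β) = (Real.pi / a) * ((t - s) * (s - τ)) * (t - τ)⁻¹ := by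
      rw [hα, hβ]
      field_simp
      ring
    have e1 : (Real.pi / (α + β)) ^ ((d : ℝ) / 2)
        = (Real.pi / a) ^ ((d : ℝ) / 2) * ((t - s) * (s - τ)) ^ ((d : ℝ) / 2) *
            (t - τ) ^ (-((d : ℝ) / 2)) := by
      rw [h2, Real.mul_rpow (by positivity) (by positivity),
        Real.mul_rpow (by positivity) (by positivity),
        Real.inv_rpow hw.le, ← Real.rpow_neg hw.le]
    rw [show -(d : ℝ) / 2 = -((d : ℝ) / 2) by ring, e1]
    have hone : ((t - s) * (s - τ)) ^ (-((d : ℝ) / 2)) * (((t - s) * (s - τ)) ^ ((d : ℝ) / 2))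
        = 1 := by
      rw [← Real.rpow_add huv]; norm_num
    calc ((t - s) * (s - τ)) ^ (-((d : ℝ) / 2)) *
          ((Real.pi / a) ^ ((d : ℝ) / 2) * ((t - s) * (s - τ)) ^ ((d : ℝ) / 2) *
            (t - τ) ^ (-((d : ℝ) / 2)))
        = (((t - s) * (s - τ)) ^ (-((d : ℝ) / 2)) * (((t - s) * (s - τ)) ^ ((d : ℝ) / 2))) *
            ((Real.pi / a) ^ ((d : ℝ) / 2) * (t - τ) ^ (-((d : ℝ) / 2))) := by ring
      _ = (Real.pi / a) ^ ((d : ℝ) / 2) * (t - τ) ^ (-((d : ℝ) / 2)) := by rw [hone, one_mul]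
  have hexp_le : Real.exp (-(a / (t - τ)) * ‖x - ξ‖ ^ 2)
      ≤ Real.exp (-a * (1 - ε) * ‖x - ξ‖ ^ 2 / (t - τ)) := by
    apply Real.exp_le_exp.2
    have hD : (0:ℝ) ≤ ‖x - ξ‖ ^ 2 := by positivity
    rw [show -(a / (t - τ)) * ‖x - ξ‖ ^ 2 = (-a * ‖x - ξ‖ ^ 2) / (t - τ) by ring]
    rw [div_le_div_iff₀ hw hw]
    nlinarith [mul_nonneg (mul_nonneg ha.le hε.le) hD, hw.le]
  calc (((t - s) * (s - τ)) ^ (-(d : ℝ) / 2) * Real.exp (-(a / (t - τ)) * ‖x - ξ‖ ^ 2)) *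
        (Real.pi / (α + β)) ^ ((d : ℝ) / 2)
      = ((Real.pi / a) ^ ((d : ℝ) / 2) * (t - τ) ^ (-(d : ℝ) / 2)) *
          Real.exp (-(a / (t - τ)) * ‖x - ξ‖ ^ 2) := by rw [← hconst]; ring
    _ ≤ ((Real.pi / a) ^ ((d : ℝ) / 2) * (t - τ) ^ (-(d : ℝ) / 2)) *
          Real.exp (-a * (1 - ε) * ‖x - ξ‖ ^ 2 / (t - τ)) :=
        mul_le_mul_of_nonneg_left hexp_le (by positivity)
end

section
/- Fix an integer d ≥ 1, T > 0, and constants C₀, c₀ > 0. Let K(x,t;ξ,τ) be a measurable function defined for x, ξ ∈ ℝ^d and 0 ≤ τ < t ≤ T satisfying |K(x,t;ξ,τ)| ≤ C₀ (t−τ)^{−(d+1)/2} exp(−c₀‖x−ξ‖²/(t−τ)). Define recursively K₁ = K and K_{m+1}(x,t;ξ,τ) = ∫_τ^t ∫_{ℝ^d} K(x,t;η,s) K_m(η,s;ξ,τ) dη ds. Then for every integer m ≥ 1 there exist constants B_m, c_m > 0, depending only on m, d, T, C₀ and c₀, such that |K_m(x,t;ξ,τ)| ≤ B_m (t−τ)^{−(d+2−m)/2}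 exp(−c_m‖x−ξ‖²/(t−τ)) for all x, ξ ∈ ℝ^d and 0 ≤ τ < t ≤ T. -/
/-!
Induction on `m`. In the step fix `s ∈ (τ, t)` and write `u = s - τ`, `v = t - s`. By the
triangle inequality the product of the Gaussians of `K(x,t;η,s)` and `K_m(η,s;ξ,τ)` is at most
`exp(-c'‖x - ξ‖²/(t - τ))`, `c' = c₀c/(2(c₀ + c))`, times a Gaussian in `η` of width `min u v`
(centred at `ξ` or at `x`, whichever factor is narrower), so the `η`-integral gains
`(min u v)^{d/2}`. As `max u v ≥ (t - τ)/2`, the time factor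
`v^{-(d+1)/2} u^{-(d+2-m)/2} (min u v)^{d/2}` is at most a constant times
`(t - τ)^{-(d+1)/2 + (m-1)/2} (u^{-1/2} + v^{-1/2})`, whose `s`-integral is `4 (t - τ)^{1/2}`.
-/

open MeasureTheory Real

theorem mul_div_add_mul_sq_le {a b : ℝ} (ha : 0 < a) (hb : 0 < b) (y z : ℝ) :
    a * b / (a + b) * (y + z) ^ 2 ≤ a * y ^ 2 + b * z ^ 2 := by
  rw [div_mul_eq_mul_div, div_le_iff₀ (by positivity)]
  nlinarith [sq_nonneg (a * y - b * z)]

theorem gaussian_mul_gaussian_le {E : Type*} [SeminormedAddCommGroup E] {a b u v : ℝ}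
    (ha : 0 < a) (hb : 0 < b) (hu : 0 < u) (hv : 0 < v) (x η ξ : E) :
    exp (-a * ‖x - η‖ ^ 2 / v) * exp (-b * ‖η - ξ‖ ^ 2 / u) ≤
      exp (-(a * b / (2 * (a + b))) * ‖x - ξ‖ ^ 2 / (u + v)) *
        exp (-(b / (2 * u)) * ‖η - ξ‖ ^ 2) := by
  set y := ‖x - η‖
  set z := ‖η - ξ‖
  have hw : ‖x - ξ‖ ^ 2 ≤ (y + z) ^ 2 :=
    pow_le_pow_left₀ (norm_nonneg _) (norm_sub_le_norm_sub_add_norm_sub x η ξ) 2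
  have hc : a * b / (2 * (a + b)) ≤ a * (b / 2) / (a + b / 2) := by
    rw [div_le_div_iff₀ (by positivity) (by positivity)]
    nlinarith [mul_pos (mul_pos ha hb) ha]
  have key : a * b / (2 * (a + b)) * ‖x - ξ‖ ^ 2 ≤ a * y ^ 2 + b / 2 * z ^ 2 :=
    calc _ ≤ a * (b / 2) / (a + b / 2) * (y + z) ^ 2 :=
          mul_le_mul hc hw (sq_nonneg _) (by positivity)
      _ ≤ _ := mul_div_add_mul_sq_le ha (half_pos hb) y z
  have h₁ : a * y ^ 2 / (u + v) ≤ a * y ^ 2 / v :=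
    div_le_div_of_nonneg_left (by positivity) hv (by linarith)
  have h₂ : b / 2 * z ^ 2 / (u + v) ≤ b / 2 * z ^ 2 / u :=
    div_le_div_of_nonneg_left (by positivity) hu (by linarith)
  have h₃ : a * b / (2 * (a + b)) * ‖x - ξ‖ ^ 2 / (u + v) ≤
      a * y ^ 2 / (u + v) + b / 2 * z ^ 2 / (u + v) := by
    rw [← add_div]; gcongr
  have hz : b * z ^ 2 / u = b / 2 * z ^ 2 / u + b / (2 * u) * z ^ 2 := by field_simp; ring
  rw [← exp_add, ← exp_add, exp_le_exp]
  simp only [neg_mul, neg_div]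
  linarith

section Gaussian

variable {V : Type*} [NormedAddCommGroup V] [InnerProductSpace ℝ V] [FiniteDimensional ℝ V]
  [MeasurableSpace V] [BorelSpace V]

theorem integral_exp_neg_mul_sq_norm_sub {k : ℝ} (hk : 0 < k) (z : V) :
    ∫ η : V, exp (-k * ‖η - z‖ ^ 2) = (π / k) ^ (Module.finrank ℝ V / 2 : ℝ) := by
  rw [integral_sub_right_eq_self (fun η : V ↦ exp (-k * ‖η‖ ^ 2)) z]
  exact GaussianFourier.integral_rexp_neg_mul_sq_norm hk

theorem integrable_exp_neg_mul_sq_norm_sub {k : ℝ} (hk : 0 < k) (z : V) :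
    Integrable fun η : V ↦ exp (-k * ‖η - z‖ ^ 2) :=
  .of_integral_ne_zero <| by rw [integral_exp_neg_mul_sq_norm_sub hk]; positivity

theorem norm_integral_le_of_norm_le_gaussian {E : Type*} [NormedAddCommGroup E]
    [NormedSpace ℝ E] {F : V → E} {C k : ℝ} (hk : 0 < k) {z : V}
    (hF : ∀ η, ‖F η‖ ≤ C * exp (-k * ‖η - z‖ ^ 2)) :
    ‖∫ η, F η‖ ≤ C * (π / k) ^ (Module.finrank ℝ V / 2 : ℝ) :=
  calc ‖∫ η, F η‖ ≤ ∫ η, C * exp (-k * ‖η - z‖ ^ 2) :=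
        norm_integral_le_of_norm_le ((integrable_exp_neg_mul_sq_norm_sub hk z).const_mul C)
          (ae_of_all _ hF)
    _ = _ := by rw [integral_const_mul, integral_exp_neg_mul_sq_norm_sub hk]

theorem norm_integral_mul_le_of_gaussian {F G : V → ℝ} {A B a b u v : ℝ} (ha : 0 < a)
    (hb : 0 < b) (hu : 0 < u) (hv : 0 < v) {x ξ : V}
    (hF : ∀ η, |F η| ≤ A * exp (-a * ‖x - η‖ ^ 2 / v))
    (hG : ∀ η, |G η| ≤ B * exp (-b * ‖η - ξ‖ ^ 2 / u)) :
    ‖∫ η, F η * G η‖ ≤ A * B * (2 * π * u / b) ^ (Module.finrank ℝ V / 2 : ℝ) *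
      exp (-(a * b / (2 * (a + b))) * ‖x - ξ‖ ^ 2 / (u + v)) := by
  have hA : 0 ≤ A := nonneg_of_mul_nonneg_left ((abs_nonneg _).trans (hF 0)) (exp_pos _)
  have hB : 0 ≤ B := nonneg_of_mul_nonneg_left ((abs_nonneg _).trans (hG 0)) (exp_pos _)
  set E := exp (-(a * b / (2 * (a + b))) * ‖x - ξ‖ ^ 2 / (u + v))
  have hbound : ∀ η, ‖F η * G η‖ ≤ A * B * E * exp (-(b / (2 * u)) * ‖η - ξ‖ ^ 2) := fun η ↦
    calc ‖F η * G η‖ = |F η| * |G η| := by rw [norm_mul, norm_eq_abs, norm_eq_abs]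
      _ ≤ A * exp (-a * ‖x - η‖ ^ 2 / v) * (B * exp (-b * ‖η - ξ‖ ^ 2 / u)) :=
        mul_le_mul (hF η) (hG η) (abs_nonneg _) (by positivity)
      _ = A * B * (exp (-a * ‖x - η‖ ^ 2 / v) * exp (-b * ‖η - ξ‖ ^ 2 / u)) := by ring
      _ ≤ A * B * (E * exp (-(b / (2 * u)) * ‖η - ξ‖ ^ 2)) :=
        mul_le_mul_of_nonneg_left (gaussian_mul_gaussian_le ha hb hu hv x η ξ) (mul_nonneg hA hB)
      _ = _ := by ring
  calc _ ≤ A * B * E * (π / (b / (2 * u))) ^ (Module.finrank ℝ V / 2 : ℝ) :=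
        norm_integral_le_of_norm_le_gaussian (by positivity) hbound
    _ = _ := by rw [show π / (b / (2 * u)) = 2 * π * u / b by field_simp]; ring

theorem norm_integral_mul_le_of_gaussian_min {F G : V → ℝ} {A B a b u v : ℝ} (ha : 0 < a)
    (hb : 0 < b) (hu : 0 < u) (hv : 0 < v) {x ξ : V}
    (hF : ∀ η, |F η| ≤ A * exp (-a * ‖x - η‖ ^ 2 / v))
    (hG : ∀ η, |G η| ≤ B * exp (-b * ‖η - ξ‖ ^ 2 / u)) :
    ‖∫ η, F η * G η‖ ≤ A * B * (2 * π * min u v / min a b) ^ (Module.finrank ℝ V / 2 : ℝ) *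
      exp (-(a * b / (2 * (a + b))) * ‖x - ξ‖ ^ 2 / (u + v)) := by
  have hA : 0 ≤ A := nonneg_of_mul_nonneg_left ((abs_nonneg _).trans (hF 0)) (exp_pos _)
  have hB : 0 ≤ B := nonneg_of_mul_nonneg_left ((abs_nonneg _).trans (hG 0)) (exp_pos _)
  rcases le_total u v with huv | hvu
  · calc _ ≤ A * B * (2 * π * u / b) ^ (Module.finrank ℝ V / 2 : ℝ) *
          exp (-(a * b / (2 * (a + b))) * ‖x - ξ‖ ^ 2 / (u + v)) :=
          norm_integral_mul_le_of_gaussian ha hb hu hv hF hG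
      _ ≤ _ := by
          gcongr
          · exact le_min le_rfl huv
          · exact min_le_right a b
  · have hswap := norm_integral_mul_le_of_gaussian hb ha hv hu (x := ξ) (ξ := x) (F := G) (G := F)
      (fun η ↦ by rw [norm_sub_rev]; exact hG η) (fun η ↦ by rw [norm_sub_rev]; exact hF η)
    simp_rw [mul_comm (G _), mul_comm b a, add_comm b a, norm_sub_rev ξ x, add_comm v u,
      mul_comm B A] at hswap
    refine hswap.trans ?_
    gcongr
    · exact le_min hvu le_rfl
    · exact min_le_left a b

end Gaussian

theorem rpow_mul_rpow_mul_min_rpow_le {u v α γ : ℝ} (hu : 0 < u) (hv : 0 < v) (hα : 0 ≤ α)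
    (hγ : 0 ≤ γ) :
    v ^ (-α - 1 / 2) * u ^ (γ - α - 1 / 2) * min u v ^ α ≤
      ((u + v) / 2) ^ (-α - 1 / 2) * (u + v) ^ γ * (u ^ (-1 / 2 : ℝ) + v ^ (-1 / 2 : ℝ)) := by
  have hu' : u ^ γ ≤ (u + v) ^ γ := rpow_le_rpow hu.le (by linarith) hγ
  rcases le_total u v with huv | hvu
  · have hv' : v ^ (-α - 1 / 2) ≤ ((u + v) / 2) ^ (-α - 1 / 2) :=
      rpow_le_rpow_of_nonpos (by positivity) (by linarith) (by linarith)
    calc _ = v ^ (-α - 1 / 2) * u ^ γ * u ^ (-1 / 2 : ℝ) := by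
          have e : u ^ (γ - α - 1 / 2) * u ^ α = u ^ γ * u ^ (-1 / 2 : ℝ) := by
            rw [← rpow_add hu, ← rpow_add hu]; ring_nf
          rw [min_eq_left huv]; linear_combination v ^ (-α - 1 / 2) * e
      _ ≤ _ := by
          gcongr
          exact le_add_of_nonneg_right (rpow_nonneg hv.le _)
  · have hu'' : u ^ (-α - 1 / 2) ≤ ((u + v) / 2) ^ (-α - 1 / 2) :=
      rpow_le_rpow_of_nonpos (by positivity) (by linarith) (by linarith)
    calc _ = u ^ (-α - 1 / 2) * u ^ γ * v ^ (-1 / 2 : ℝ) := by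
          have e₁ : v ^ (-α - 1 / 2) * v ^ α = v ^ (-1 / 2 : ℝ) := by
            rw [← rpow_add hv]; ring_nf
          have e₂ : u ^ (γ - α - 1 / 2) = u ^ (-α - 1 / 2) * u ^ γ := by
            rw [← rpow_add hu]; ring_nf
          rw [min_eq_right hvu, e₂]; linear_combination u ^ (-α - 1 / 2) * u ^ γ * e₁
      _ ≤ _ := by
          gcongr
          exact le_add_of_nonneg_left (rpow_nonneg hu.le _)

theorem intervalIntegrable_sub_rpow {r : ℝ} (hr : -1 < r) (a b : ℝ) :
    IntervalIntegrable (fun s ↦ (s - a) ^ r) volume a b := by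
  simpa using (intervalIntegral.intervalIntegrable_rpow' (a := 0) (b := b - a) hr).comp_sub_right a

theorem intervalIntegrable_rpow_sub {r : ℝ} (hr : -1 < r) (a b : ℝ) :
    IntervalIntegrable (fun s ↦ (b - s) ^ r) volume a b := by
  simpa using (intervalIntegral.intervalIntegrable_rpow' (a := b - a) (b := 0) hr).comp_sub_left b

theorem integral_sub_rpow_add_rpow_sub {r : ℝ} (hr : -1 < r) (a b : ℝ) :
    ∫ s in a..b, ((s - a) ^ r + (b - s) ^ r) = 2 * ((b - a) ^ (r + 1) / (r + 1)) := by
  rw [intervalIntegral.integral_add (intervalIntegrable_sub_rpow hr a b)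
    (intervalIntegrable_rpow_sub hr a b), intervalIntegral.integral_comp_sub_right (· ^ r),
    intervalIntegral.integral_comp_sub_left (· ^ r)]
  simp only [sub_self, integral_rpow (.inl hr), zero_rpow (by linarith : r + 1 ≠ 0)]
  ring

def HasGaussianBound {E : Type*} [SeminormedAddCommGroup E] (T C c γ : ℝ)
    (K : E → ℝ → E → ℝ → ℝ) : Prop :=
  ∀ (x ξ : E) (τ t : ℝ), 0 ≤ τ → τ < t → t ≤ T →
    |K x t ξ τ| ≤ C * (t - τ) ^ γ * exp (-c * ‖x - ξ‖ ^ 2 / (t - τ))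

namespace HasGaussianBound

variable {d n : ℕ} {T C₀ c₀ B c : ℝ}
  {K L : EuclideanSpace ℝ (Fin d) → ℝ → EuclideanSpace ℝ (Fin d) → ℝ → ℝ}

theorem norm_integral_mul_le (hK : HasGaussianBound T C₀ c₀ (-((d : ℝ) + 1) / 2) K)
    (hL : HasGaussianBound T B c (-((d : ℝ) + 2 - n) / 2) L) (hn : 1 ≤ n) (hC₀ : 0 ≤ C₀)
    (hB : 0 ≤ B) (hc₀ : 0 < c₀) (hc : 0 < c) {x ξ : EuclideanSpace ℝ (Fin d)} {τ s t : ℝ}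
    (hτ : 0 ≤ τ) (hτs : τ < s) (hst : s < t) (htT : t ≤ T) :
    ‖∫ η, K x t η s * L η s ξ τ‖ ≤
      C₀ * B * (2 * π / min c₀ c) ^ ((d : ℝ) / 2) * ((t - τ) / 2) ^ (-((d : ℝ) + 1) / 2) *
        (t - τ) ^ (((n : ℝ) - 1) / 2) * exp (-(c₀ * c / (2 * (c₀ + c))) * ‖x - ξ‖ ^ 2 / (t - τ)) *
        ((s - τ) ^ (-1 / 2 : ℝ) + (t - s) ^ (-1 / 2 : ℝ)) := by
  have hu : 0 < s - τ := sub_pos.2 hτs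
  have hv : 0 < t - s := sub_pos.2 hst
  have hconv := norm_integral_mul_le_of_gaussian_min hc₀ hc hu hv
    (fun η ↦ hK x η s t (hτ.trans hτs.le) hst htT) (fun η ↦ hL η ξ τ s hτ hτs (hst.le.trans htT))
  rw [finrank_euclideanSpace_fin, show s - τ + (t - s) = t - τ by ring, mul_div_right_comm,
    mul_rpow (by positivity) (by positivity)] at hconv
  have htime : (t - s) ^ (-((d : ℝ) + 1) / 2) * (s - τ) ^ (-((d : ℝ) + 2 - n) / 2) *
      min (s - τ) (t - s) ^ ((d : ℝ) / 2) ≤ ((t - τ) / 2) ^ (-((d : ℝ) + 1) / 2) *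
        (t - τ) ^ (((n : ℝ) - 1) / 2) * ((s - τ) ^ (-1 / 2 : ℝ) + (t - s) ^ (-1 / 2 : ℝ)) := by
    have hn' : (1 : ℝ) ≤ n := by exact_mod_cast hn
    convert rpow_mul_rpow_mul_min_rpow_le hu hv (α := (d : ℝ) / 2) (γ := ((n : ℝ) - 1) / 2)
      (by positivity) (by linarith) using 4 <;> ring
  refine hconv.trans ?_
  calc _ = C₀ * B * (2 * π / min c₀ c) ^ ((d : ℝ) / 2) *
        exp (-(c₀ * c / (2 * (c₀ + c))) * ‖x - ξ‖ ^ 2 / (t - τ)) *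
        ((t - s) ^ (-((d : ℝ) + 1) / 2) * (s - τ) ^ (-((d : ℝ) + 2 - n) / 2) *
          min (s - τ) (t - s) ^ ((d : ℝ) / 2)) := by ring
    _ ≤ _ := by
        refine (mul_le_mul_of_nonneg_left htime (by positivity)).trans_eq ?_
        ring

theorem intervalIntegral_comp (hK : HasGaussianBound T C₀ c₀ (-((d : ℝ) + 1) / 2) K)
    (hL : HasGaussianBound T B c (-((d : ℝ) + 2 - n) / 2) L) (hn : 1 ≤ n) (hC₀ : 0 ≤ C₀)
    (hB : 0 ≤ B) (hc₀ : 0 < c₀) (hc : 0 < c) :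
    HasGaussianBound T (4 * 2 ^ (((d : ℝ) + 1) / 2) * C₀ * B * (2 * π / min c₀ c) ^ ((d : ℝ) / 2))
      (c₀ * c / (2 * (c₀ + c))) (-((d : ℝ) + 2 - (n + 1 : ℕ)) / 2)
      (fun x t ξ τ ↦ ∫ s in τ..t, ∫ η, K x t η s * L η s ξ τ) := by
  intro x ξ τ t hτ hτt htT
  have hδ : 0 < t - τ := sub_pos.2 hτt
  set M := C₀ * B * (2 * π / min c₀ c) ^ ((d : ℝ) / 2) * ((t - τ) / 2) ^ (-((d : ℝ) + 1) / 2) *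
    (t - τ) ^ (((n : ℝ) - 1) / 2) * exp (-(c₀ * c / (2 * (c₀ + c))) * ‖x - ξ‖ ^ 2 / (t - τ))
  have hsplit : ((t - τ) / 2) ^ (-((d : ℝ) + 1) / 2) =
      2 ^ (((d : ℝ) + 1) / 2) * (t - τ) ^ (-((d : ℝ) + 1) / 2) := by
    rw [div_rpow hδ.le zero_le_two, neg_div, rpow_neg hδ.le, rpow_neg zero_le_two]
    field_simp
  have hexp : (t - τ) ^ (-((d : ℝ) + 1) / 2) * (t - τ) ^ (((n : ℝ) - 1) / 2) *
      (t - τ) ^ (1 / 2 : ℝ) = (t - τ) ^ (-((d : ℝ) + 2 - (n + 1 : ℕ)) / 2) := by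
    rw [← rpow_add hδ, ← rpow_add hδ]
    push_cast
    ring_nf
  calc |∫ s in τ..t, ∫ η, K x t η s * L η s ξ τ|
      ≤ ∫ s in τ..t, M * ((s - τ) ^ (-1 / 2 : ℝ) + (t - s) ^ (-1 / 2 : ℝ)) := by
        rw [← norm_eq_abs]
        refine intervalIntegral.norm_integral_le_of_norm_le hτt.le ?_
          ((intervalIntegrable_sub_rpow (r := -1 / 2) (by norm_num) τ t).add
            (intervalIntegrable_rpow_sub (r := -1 / 2) (by norm_num) τ t) |>.const_mul M)
        filter_upwards [Measure.ae_ne volume t] with s hs hsI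
        exact norm_integral_mul_le hK hL hn hC₀ hB hc₀ hc hτ hsI.1
          (lt_of_le_of_ne hsI.2 hs) htT
    _ = M * (4 * (t - τ) ^ (1 / 2 : ℝ)) := by
        rw [intervalIntegral.integral_const_mul, integral_sub_rpow_add_rpow_sub (by norm_num),
          show (-1 / 2 + 1 : ℝ) = 1 / 2 by norm_num]
        ring
    _ = _ := by
        rw [← hexp]
        simp only [M, hsplit]
        ring

end HasGaussianBound

theorem stmt_4_general (d : ℕ) (T C₀ c₀ : ℝ) (hC₀ : 0 < C₀) (hc₀ : 0 < c₀) :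
    ∀ m : ℕ, 1 ≤ m → ∃ B c : ℝ, 0 < B ∧ 0 < c ∧
      ∀ (K : EuclideanSpace ℝ (Fin d) → ℝ → EuclideanSpace ℝ (Fin d) → ℝ → ℝ)
        (Km : ℕ → EuclideanSpace ℝ (Fin d) → ℝ → EuclideanSpace ℝ (Fin d) → ℝ → ℝ),
        Measurable (fun p : (EuclideanSpace ℝ (Fin d)) × ℝ ×
            (EuclideanSpace ℝ (Fin d)) × ℝ => K p.1 p.2.1 p.2.2.1 p.2.2.2) →
        (∀ (x ξ : EuclideanSpace ℝ (Fin d)) (τ t : ℝ), 0 ≤ τ → τ < t → t ≤ T →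
          |K x t ξ τ| ≤ C₀ * (t - τ) ^ (-((d : ℝ) + 1) / 2) *
            Real.exp (-c₀ * ‖x - ξ‖ ^ 2 / (t - τ))) →
        (∀ (x ξ : EuclideanSpace ℝ (Fin d)) (t τ : ℝ), Km 1 x t ξ τ = K x t ξ τ) →
        (∀ n : ℕ, 1 ≤ n → ∀ (x ξ : EuclideanSpace ℝ (Fin d)) (t τ : ℝ),
          Km (n + 1) x t ξ τ =
            ∫ s in τ..t, ∫ η : EuclideanSpace ℝ (Fin d), K x t η s * Km n η s ξ τ) →
        ∀ (x ξ : EuclideanSpace ℝ (Fin d)) (τ t : ℝ), 0 ≤ τ → τ < t → t ≤ T →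
          |Km m x t ξ τ| ≤ B * (t - τ) ^ (-((d : ℝ) + 2 - (m : ℝ)) / 2) *
            Real.exp (-c * ‖x - ξ‖ ^ 2 / (t - τ)) := by
  intro m hm
  induction m, hm using Nat.le_induction with
  | base =>
    refine ⟨C₀, c₀, hC₀, hc₀, fun K Km _ hK h₁ _ x ξ τ t hτ hτt htT ↦ ?_⟩
    rw [h₁]
    convert hK x ξ τ t hτ hτt htT using 4
    push_cast
    ring
  | succ n hn ih =>
    obtain ⟨B, c, hB, hc, hKm⟩ := ih
    refine ⟨4 * 2 ^ (((d : ℝ) + 1) / 2) * C₀ * B * (2 * π / min c₀ c) ^ ((d : ℝ) / 2),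
      c₀ * c / (2 * (c₀ + c)), by positivity, by positivity,
      fun K Km hmeas hK h₁ hrec x ξ τ t hτ hτt htT ↦ ?_⟩
    rw [hrec n hn]
    exact HasGaussianBound.intervalIntegral_comp hK (hKm K Km hmeas hK h₁ hrec) hn hC₀.le hB.le
      hc₀ hc x ξ τ t hτ hτt htT

/-- Iterated parametrix kernels. If `K` is measurable and satisfies
the Gaussian bound `|K(x,t;ξ,τ)| ≤ C₀ (t−τ)^{−(d+1)/2} exp(−c₀‖x−ξ‖²/(t−τ))` on
`0 ≤ τ < t ≤ T`, and `Km` is the recursively defined family `K₁ = K`,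
`K_{m+1}(x,t;ξ,τ) = ∫_τ^t ∫_{ℝ^d} K(x,t;η,s) K_m(η,s;ξ,τ) dη ds`, then for every
`m ≥ 1` there are constants `B_m, c_m > 0` (depending only on `m, d, T, C₀, c₀`)
with `|K_m(x,t;ξ,τ)| ≤ B_m (t−τ)^{−(d+2−m)/2} exp(−c_m‖x−ξ‖²/(t−τ))`. -/
theorem stmt_4 (d : ℕ) (hd : 1 ≤ d) (T C₀ c₀ : ℝ) (hT : 0 < T) (hC₀ : 0 < C₀)
    (hc₀ : 0 < c₀) :
    ∀ m : ℕ, 1 ≤ m → ∃ B c : ℝ, 0 < B ∧ 0 < c ∧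
      ∀ (K : EuclideanSpace ℝ (Fin d) → ℝ → EuclideanSpace ℝ (Fin d) → ℝ → ℝ)
        (Km : ℕ → EuclideanSpace ℝ (Fin d) → ℝ → EuclideanSpace ℝ (Fin d) → ℝ → ℝ),
        Measurable (fun p : (EuclideanSpace ℝ (Fin d)) × ℝ ×
            (EuclideanSpace ℝ (Fin d)) × ℝ => K p.1 p.2.1 p.2.2.1 p.2.2.2) →
        (∀ (x ξ : EuclideanSpace ℝ (Fin d)) (τ t : ℝ), 0 ≤ τ → τ < t → t ≤ T →
          |K x t ξ τ| ≤ C₀ * (t - τ) ^ (-((d : ℝ) + 1) / 2) *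
            Real.exp (-c₀ * ‖x - ξ‖ ^ 2 / (t - τ))) →
        (∀ (x ξ : EuclideanSpace ℝ (Fin d)) (t τ : ℝ), Km 1 x t ξ τ = K x t ξ τ) →
        (∀ n : ℕ, 1 ≤ n → ∀ (x ξ : EuclideanSpace ℝ (Fin d)) (t τ : ℝ),
          Km (n + 1) x t ξ τ =
            ∫ s in τ..t, ∫ η : EuclideanSpace ℝ (Fin d), K x t η s * Km n η s ξ τ) →
        ∀ (x ξ : EuclideanSpace ℝ (Fin d)) (τ t : ℝ), 0 ≤ τ → τ < t → t ≤ T →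
          |Km m x t ξ τ| ≤ B * (t - τ) ^ (-((d : ℝ) + 2 - (m : ℝ)) / 2) *
            Real.exp (-c * ‖x - ξ‖ ^ 2 / (t - τ)) :=
  stmt_4_general d T C₀ c₀ hC₀ hc₀
end

section
/- Fix C > 0, ϱ ∈ (0,1), t₀ ≥ 0 and x₀ ∈ ℝ. For h ∈ (0,1) set ε = h^ϱ, I_h = [t₀, t₀+ε+h²], and for r ∈ I_h set I_{h,r} = [max(r−h², t₀), min(r, t₀+ε)]. Define Ã(z,r) = ∫_{I_{h,r}} ∫_{B(x₀,ε)} Γ_C(y−z, s+h²−r) dy ds and m̂²(h) = h^{−4} ∫_{I_h} ∫_{ℝ} Ã(z,r)² dz dr. Then there exist constants K ≥ 1 and h₀ ∈ (0,1), depending only on ϱ and C, such that for all h ∈ (0,h₀), K^{−1} h^{2ϱ} ≤ m̂²(h) ≤ K h^{2ϱ}. -/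
open MeasureTheory

/-- The one-dimensional Gaussian kernel `Γ_C(x,t) = t^{−1/2} exp(−x²/(Ct))`. -/
noncomputable def GammaKer1 (C x t : ℝ) : ℝ :=
  t ^ (-(1 : ℝ) / 2) * Real.exp (-x ^ 2 / (C * t))

/-- `Ã(z,r) = ∫_{I_{h,r}} ∫_{x₀−ε}^{x₀+ε} Γ_C(y−z, s+h²−r) dy ds` where
`I_{h,r} = [max(r−h²,t₀), min(r, t₀+ε)]`. -/
noncomputable def Atilde1 (C t₀ x₀ ε h z r : ℝ) : ℝ :=
  ∫ s in Set.Icc (max (r - h ^ 2) t₀) (min r (t₀ + ε)),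
    ∫ y in Set.Ioo (x₀ - ε) (x₀ + ε), GammaKer1 C (y - z) (s + h ^ 2 - r)

/-- `m̂²(h) = h^{−4} ∫_{I_h} ∫_{ℝ} Ã(z,r)² dz dr` with `I_h = [t₀, t₀+ε+h²]`. -/
noncomputable def msqHat (C t₀ x₀ ε h : ℝ) : ℝ :=
  (∫ r in Set.Icc t₀ (t₀ + ε + h ^ 2), ∫ z : ℝ, (Atilde1 C t₀ x₀ ε h z r) ^ 2) / h ^ 4

open Real Set ENNReal

lemma gamma_nonneg (C x t : ℝ) : 0 ≤ GammaKer1 C x t := by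
  unfold GammaKer1
  rcases lt_trichotomy t 0 with ht | rfl | ht
  · rw [Real.rpow_def_of_neg ht]
    have : Real.cos (-(1:ℝ)/2 * π) = 0 := by
      rw [show (-(1:ℝ)/2 * π) = -(π/2) by ring, Real.cos_neg, Real.cos_pi_div_two]
    rw [this]
    simp
  · rw [Real.zero_rpow (by norm_num)]
    simp
  · positivity

lemma gamma_zero_of_nonpos (C x : ℝ) {t : ℝ} (ht : t ≤ 0) : GammaKer1 C x t = 0 := by
  unfold GammaKer1
  rcases lt_or_eq_of_le ht with ht | rfl
  · rw [Real.rpow_def_of_neg ht]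
    have : Real.cos (-(1:ℝ)/2 * π) = 0 := by
      rw [show (-(1:ℝ)/2 * π) = -(π/2) by ring, Real.cos_neg, Real.cos_pi_div_two]
    rw [this]; ring
  · rw [Real.zero_rpow (by norm_num)]; ring

lemma gamma_measurable (C : ℝ) : Measurable fun p : ℝ × ℝ => GammaKer1 C p.1 p.2 := by
  unfold GammaKer1
  fun_prop

lemma lintegral_gamma (C : ℝ) (hC : 0 < C) {t : ℝ} (ht : 0 < t) (c : ℝ) :
    ∫⁻ x : ℝ, ENNReal.ofReal (GammaKer1 C (x - c) t) = ENNReal.ofReal (Real.sqrt (π * C)) := by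
  have hb : 0 < 1 / (C * t) := by positivity
  have hint : Integrable (fun x : ℝ => Real.exp (-(1/(C*t)) * (x - c) ^ 2)) := by
    exact (integrable_exp_neg_mul_sq hb).comp_sub_right c
  have h1 : ∀ x : ℝ, GammaKer1 C (x - c) t
      = t ^ (-(1:ℝ)/2) * Real.exp (-(1/(C*t)) * (x - c) ^ 2) := by
    intro x
    unfold GammaKer1
    congr 1
    congr 1
    field_simp
  simp_rw [h1]
  have h2 : ∀ x : ℝ, ENNReal.ofReal (t ^ (-(1:ℝ)/2) * Real.exp (-(1/(C*t)) * (x - c) ^ 2))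
      = ENNReal.ofReal (t ^ (-(1:ℝ)/2)) * ENNReal.ofReal (Real.exp (-(1/(C*t)) * (x - c) ^ 2)) := by
    intro x; exact ENNReal.ofReal_mul (by positivity)
  simp_rw [h2]
  rw [lintegral_const_mul _ (by fun_prop)]
  rw [← ofReal_integral_eq_lintegral_ofReal hint (Filter.Eventually.of_forall fun x => (Real.exp_pos _).le)]
  rw [integral_sub_right_eq_self (fun x => Real.exp (-(1/(C*t)) * x ^ 2)) c]
  rw [integral_gaussian]
  rw [← ENNReal.ofReal_mul (by positivity)]
  congr 1
  rw [show π / (1/(C*t)) = (π * C) * t by field_simp]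
  rw [Real.sqrt_mul (by positivity)]
  rw [Real.sqrt_eq_rpow t, mul_left_comm, ← Real.rpow_add ht]
  norm_num

noncomputable def Lf (C x₀ ε z t : ℝ) : ℝ≥0∞ :=
  ∫⁻ y in Set.Ioo (x₀ - ε) (x₀ + ε), ENNReal.ofReal (GammaKer1 C (y - z) t)

lemma Lf_kernel_measurable (C x₀ ε : ℝ) :
    Measurable fun q : (ℝ × ℝ) × ℝ => ENNReal.ofReal (GammaKer1 C (q.2 - q.1.1) q.1.2) := by
  apply ENNReal.measurable_ofReal.comp
  exact (gamma_measurable C).comp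
    (by fun_prop : Measurable fun q : (ℝ × ℝ) × ℝ => (q.2 - q.1.1, q.1.2))

lemma Lf_measurable (C x₀ ε : ℝ) : Measurable fun p : ℝ × ℝ => Lf C x₀ ε p.1 p.2 :=
  Measurable.lintegral_prod_right' (Lf_kernel_measurable C x₀ ε)

lemma Lf_le (C x₀ ε : ℝ) (hC : 0 < C) (z t : ℝ) :
    Lf C x₀ ε z t ≤ ENNReal.ofReal (Real.sqrt (π * C)) := by
  rcases le_or_gt t 0 with ht | ht
  · have : Lf C x₀ ε z t = 0 := by
      unfold Lf
      have : ∀ y : ℝ, ENNReal.ofReal (GammaKer1 C (y - z) t) = 0 := by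
        intro y; rw [gamma_zero_of_nonpos C _ ht]; simp
      simp_rw [this]; simp
    simp [this]
  · calc Lf C x₀ ε z t ≤ ∫⁻ y : ℝ, ENNReal.ofReal (GammaKer1 C (y - z) t) :=
        lintegral_mono' Measure.restrict_le_self le_rfl
    _ = ENNReal.ofReal (Real.sqrt (π * C)) := lintegral_gamma C hC ht z

lemma lintegral_Lf_z_le (C x₀ ε : ℝ) (hC : 0 < C) (hε : 0 ≤ ε) (t : ℝ) :
    ∫⁻ z : ℝ, Lf C x₀ ε z t ≤ ENNReal.ofReal (Real.sqrt (π * C)) * ENNReal.ofReal (2 * ε) := by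
  unfold Lf
  rw [lintegral_lintegral_swap]
  swap
  · exact ((Lf_kernel_measurable C x₀ ε).comp (by fun_prop : Measurable
      fun q : ℝ × ℝ => ((q.1, t), q.2))).aemeasurable
  have hinner : ∀ y : ℝ, (∫⁻ z : ℝ, ENNReal.ofReal (GammaKer1 C (y - z) t))
      ≤ ENNReal.ofReal (Real.sqrt (π * C)) := by
    intro y
    rcases le_or_gt t 0 with ht | ht
    · have : ∀ z : ℝ, ENNReal.ofReal (GammaKer1 C (y - z) t) = 0 := by
        intro z; rw [gamma_zero_of_nonpos C _ ht]; simp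
      simp_rw [this]; simp
    · have heq : ∀ z : ℝ, GammaKer1 C (y - z) t = GammaKer1 C (z - y) t := by
        intro z; unfold GammaKer1; rw [show (y - z) ^ 2 = (z - y) ^ 2 by ring]
      simp_rw [heq]
      rw [lintegral_gamma C hC ht y]
  calc (∫⁻ y in Set.Ioo (x₀ - ε) (x₀ + ε), ∫⁻ z : ℝ, ENNReal.ofReal (GammaKer1 C (y - z) t))
      ≤ ∫⁻ _ in Set.Ioo (x₀ - ε) (x₀ + ε), ENNReal.ofReal (Real.sqrt (π * C)) :=
        setLIntegral_mono' measurableSet_Ioo fun y _ => hinner y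
    _ = ENNReal.ofReal (Real.sqrt (π * C)) * ENNReal.ofReal (2 * ε) := by
        rw [setLIntegral_const, Real.volume_Ioo]
        congr 1
        ring_nf

lemma Lf_ge (C x₀ ε : ℝ) (hC : 0 < C) {z t : ℝ}
    (hz : z ∈ Set.Ioo (x₀ - ε/2) (x₀ + ε/2)) (ht : 0 < t) (hts : Real.sqrt t ≤ ε/2) :
    ENNReal.ofReal (2 * Real.exp (-1/C)) ≤ Lf C x₀ ε z t := by
  have hst := Real.sqrt_nonneg t
  have hsub : Set.Ioo (z - Real.sqrt t) (z + Real.sqrt t) ⊆ Set.Ioo (x₀ - ε) (x₀ + ε) := by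
    intro y hy
    simp only [Set.mem_Ioo] at *
    constructor <;> nlinarith [hz.1, hz.2, hy.1, hy.2]
  have hpt : ∀ y ∈ Set.Ioo (z - Real.sqrt t) (z + Real.sqrt t),
      ENNReal.ofReal (t ^ (-(1:ℝ)/2) * Real.exp (-1/C)) ≤ ENNReal.ofReal (GammaKer1 C (y - z) t) := by
    intro y hy
    apply ENNReal.ofReal_le_ofReal
    unfold GammaKer1
    apply mul_le_mul_of_nonneg_left _ (by positivity)
    apply Real.exp_le_exp.mpr
    have h1 : (y - z) ^ 2 ≤ t := by
      simp only [Set.mem_Ioo] at hy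
      nlinarith [Real.sq_sqrt ht.le, hy.1, hy.2]
    have h2 : (y - z) ^ 2 / (C * t) ≤ 1 / C := by
      rw [div_le_div_iff₀ (by positivity : (0:ℝ) < C * t) hC]
      nlinarith
    rw [neg_div, neg_div]
    exact neg_le_neg h2
  calc ENNReal.ofReal (2 * Real.exp (-1/C))
      = ENNReal.ofReal (t ^ (-(1:ℝ)/2) * Real.exp (-1/C)) * volume (Set.Ioo (z - Real.sqrt t) (z + Real.sqrt t)) := by
        rw [Real.volume_Ioo, ← ENNReal.ofReal_mul (by positivity)]
        congr 1
        have hss : z + Real.sqrt t - (z - Real.sqrt t) = 2 * Real.sqrt t := by ring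
        rw [hss, Real.sqrt_eq_rpow]
        rw [show t ^ (-(1:ℝ)/2) * Real.exp (-1/C) * (2 * t ^ ((1:ℝ)/2))
          = 2 * Real.exp (-1/C) * (t ^ (-(1:ℝ)/2) * t ^ ((1:ℝ)/2)) by ring]
        rw [← Real.rpow_add ht]
        norm_num
    _ = ∫⁻ _ in Set.Ioo (z - Real.sqrt t) (z + Real.sqrt t),
          ENNReal.ofReal (t ^ (-(1:ℝ)/2) * Real.exp (-1/C)) := by
        rw [setLIntegral_const]
    _ ≤ ∫⁻ y in Set.Ioo (z - Real.sqrt t) (z + Real.sqrt t),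
          ENNReal.ofReal (GammaKer1 C (y - z) t) :=
        setLIntegral_mono' measurableSet_Ioo hpt
    _ ≤ Lf C x₀ ε z t :=
        lintegral_mono' (Measure.restrict_mono hsub le_rfl) le_rfl

noncomputable def Af (C t₀ x₀ ε h z r : ℝ) : ℝ≥0∞ :=
  ∫⁻ s in Set.Icc (max (r - h ^ 2) t₀) (min r (t₀ + ε)), Lf C x₀ ε z (s + h ^ 2 - r)

lemma Af_measurable (C t₀ x₀ ε h : ℝ) :
    Measurable fun p : ℝ × ℝ => Af C t₀ x₀ ε h p.1 p.2 := by
  have key : ∀ p : ℝ × ℝ, Af C t₀ x₀ ε h p.1 p.2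
      = ∫⁻ s : ℝ, (fun q : (ℝ × ℝ) × ℝ =>
          if max (q.1.2 - h ^ 2) t₀ ≤ q.2 ∧ q.2 ≤ min q.1.2 (t₀ + ε)
            then Lf C x₀ ε q.1.1 (q.2 + h ^ 2 - q.1.2) else 0) (p, s) := by
    intro p
    unfold Af
    rw [← lintegral_indicator measurableSet_Icc]
    congr 1
    funext s
    rw [Set.indicator_apply]
    simp [Set.mem_Icc]
  simp_rw [key]
  have hker : Measurable (fun q : (ℝ × ℝ) × ℝ =>
      if max (q.1.2 - h ^ 2) t₀ ≤ q.2 ∧ q.2 ≤ min q.1.2 (t₀ + ε)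
        then Lf C x₀ ε q.1.1 (q.2 + h ^ 2 - q.1.2) else 0) := by
    apply Measurable.ite
    · exact ((measurableSet_le (by fun_prop) (by fun_prop)).inter
        (measurableSet_le (by fun_prop) (by fun_prop)) :
        MeasurableSet ({a : (ℝ × ℝ) × ℝ | max (a.1.2 - h ^ 2) t₀ ≤ a.2}
          ∩ {a : (ℝ × ℝ) × ℝ | a.2 ≤ min a.1.2 (t₀ + ε)}))
    · exact (Lf_measurable C x₀ ε).comp (by fun_prop : Measurable
        fun q : (ℝ × ℝ) × ℝ => (q.1.1, q.2 + h ^ 2 - q.1.2))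
    · exact measurable_const
  exact Measurable.lintegral_prod_right' (ν := volume) hker

lemma Af_le (C t₀ x₀ ε h : ℝ) (hC : 0 < C) (z r : ℝ) :
    Af C t₀ x₀ ε h z r ≤ ENNReal.ofReal (Real.sqrt (π * C)) * ENNReal.ofReal (h ^ 2) := by
  calc Af C t₀ x₀ ε h z r
      ≤ ∫⁻ _ in Set.Icc (max (r - h ^ 2) t₀) (min r (t₀ + ε)),
          ENNReal.ofReal (Real.sqrt (π * C)) :=
        setLIntegral_mono' measurableSet_Icc fun s _ => Lf_le C x₀ ε hC z _
    _ = ENNReal.ofReal (Real.sqrt (π * C)) * volume (Set.Icc (max (r - h ^ 2) t₀) (min r (t₀ + ε))) :=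
        setLIntegral_const _ _
    _ ≤ ENNReal.ofReal (Real.sqrt (π * C)) * ENNReal.ofReal (h ^ 2) := by
        apply mul_le_mul_right
        rw [Real.volume_Icc]
        apply ENNReal.ofReal_le_ofReal
        have h1 : min r (t₀ + ε) ≤ r := min_le_left _ _
        have h2 : r - h ^ 2 ≤ max (r - h ^ 2) t₀ := le_max_left _ _
        linarith

lemma lintegral_Af_z_le (C t₀ x₀ ε h : ℝ) (hC : 0 < C) (hε : 0 ≤ ε) (r : ℝ) :
    ∫⁻ z : ℝ, Af C t₀ x₀ ε h z r
      ≤ ENNReal.ofReal (Real.sqrt (π * C)) * ENNReal.ofReal (2 * ε) * ENNReal.ofReal (h ^ 2) := by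
  unfold Af
  rw [lintegral_lintegral_swap]
  swap
  · exact ((Lf_measurable C x₀ ε).comp (by fun_prop : Measurable
      fun q : ℝ × ℝ => (q.1, q.2 + h ^ 2 - r))).aemeasurable
  calc (∫⁻ s in Set.Icc (max (r - h ^ 2) t₀) (min r (t₀ + ε)), ∫⁻ z : ℝ, Lf C x₀ ε z (s + h ^ 2 - r))
      ≤ ∫⁻ _ in Set.Icc (max (r - h ^ 2) t₀) (min r (t₀ + ε)),
          ENNReal.ofReal (Real.sqrt (π * C)) * ENNReal.ofReal (2 * ε) :=
        setLIntegral_mono' measurableSet_Icc fun s _ => lintegral_Lf_z_le C x₀ ε hC hε _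
    _ ≤ ENNReal.ofReal (Real.sqrt (π * C)) * ENNReal.ofReal (2 * ε) * ENNReal.ofReal (h ^ 2) := by
        rw [setLIntegral_const]
        apply mul_le_mul_right
        rw [Real.volume_Icc]
        apply ENNReal.ofReal_le_ofReal
        have h1 : min r (t₀ + ε) ≤ r := min_le_left _ _
        have h2 : r - h ^ 2 ≤ max (r - h ^ 2) t₀ := le_max_left _ _
        linarith

attribute [irreducible] Af Lf GammaKer1 in
lemma lintegral_Af_sq_le (C t₀ x₀ ε h : ℝ) (hC : 0 < C) (hε : 0 ≤ ε) (r : ℝ) :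
    ∫⁻ z : ℝ, (Af C t₀ x₀ ε h z r) ^ 2
      ≤ ENNReal.ofReal (2 * (π * C) * ε * h ^ 4) := by
  have hMsq : Real.sqrt (π * C) * Real.sqrt (π * C) = π * C :=
    Real.mul_self_sqrt (by positivity)
  calc ∫⁻ z : ℝ, (Af C t₀ x₀ ε h z r) ^ 2
      ≤ ∫⁻ z : ℝ, (ENNReal.ofReal (Real.sqrt (π * C)) * ENNReal.ofReal (h ^ 2))
          * Af C t₀ x₀ ε h z r := by
        refine lintegral_mono fun z => ?_
        calc Af C t₀ x₀ ε h z r ^ 2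
            = Af C t₀ x₀ ε h z r * Af C t₀ x₀ ε h z r := pow_two (Af C t₀ x₀ ε h z r)
          _ ≤ _ := mul_le_mul_left (Af_le C t₀ x₀ ε h hC z r) _
    _ = (ENNReal.ofReal (Real.sqrt (π * C)) * ENNReal.ofReal (h ^ 2))
          * ∫⁻ z : ℝ, Af C t₀ x₀ ε h z r := by
        rw [lintegral_const_mul]
        exact (Af_measurable C t₀ x₀ ε h).comp (by fun_prop : Measurable fun z : ℝ => (z, r))
    _ ≤ (ENNReal.ofReal (Real.sqrt (π * C)) * ENNReal.ofReal (h ^ 2))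
          * (ENNReal.ofReal (Real.sqrt (π * C)) * ENNReal.ofReal (2 * ε) * ENNReal.ofReal (h ^ 2)) :=
        mul_le_mul_right (lintegral_Af_z_le C t₀ x₀ ε h hC hε r) _
    _ = ENNReal.ofReal (Real.sqrt (π * C) * h ^ 2 * (Real.sqrt (π * C) * (2 * ε) * h ^ 2)) := by
        rw [ENNReal.ofReal_mul (by positivity : (0:ℝ) ≤ Real.sqrt (π * C) * h ^ 2),
          ENNReal.ofReal_mul (by positivity : (0:ℝ) ≤ Real.sqrt (π * C)),
          ENNReal.ofReal_mul (by positivity : (0:ℝ) ≤ Real.sqrt (π * C) * (2 * ε)),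
          ENNReal.ofReal_mul (by positivity : (0:ℝ) ≤ Real.sqrt (π * C))]
    _ = ENNReal.ofReal (2 * (π * C) * ε * h ^ 4) := by
        congr 1
        linear_combination (2 * ε * h ^ 2 * h ^ 2) * hMsq

lemma Af_ge (C t₀ x₀ ε h : ℝ) (hC : 0 < C) (hh : 0 < h) (hhe : h ≤ ε / 2)
    {z r : ℝ} (hz : z ∈ Set.Ioo (x₀ - ε/2) (x₀ + ε/2)) (hr : r ∈ Set.Ioo (t₀ + h ^ 2) (t₀ + ε)) :
    ENNReal.ofReal (2 * Real.exp (-1/C)) * ENNReal.ofReal (h ^ 2) ≤ Af C t₀ x₀ ε h z r := by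
  have hmax : max (r - h ^ 2) t₀ = r - h ^ 2 := max_eq_left (by linarith [hr.1])
  have hmin : min r (t₀ + ε) = r := min_eq_left (by linarith [hr.2])
  unfold Af
  rw [hmax, hmin]
  calc ENNReal.ofReal (2 * Real.exp (-1/C)) * ENNReal.ofReal (h ^ 2)
      = ∫⁻ _ in Set.Ioo (r - h ^ 2) r, ENNReal.ofReal (2 * Real.exp (-1/C)) := by
        rw [setLIntegral_const, Real.volume_Ioo]
        congr 2
        ring
    _ ≤ ∫⁻ s in Set.Ioo (r - h ^ 2) r, Lf C x₀ ε z (s + h ^ 2 - r) := by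
        apply setLIntegral_mono' measurableSet_Ioo
        intro s hs
        apply Lf_ge C x₀ ε hC hz
        · simp only [Set.mem_Ioo] at hs; linarith [hs.1]
        · simp only [Set.mem_Ioo] at hs
          have h1 : s + h ^ 2 - r ≤ h ^ 2 := by linarith [hs.2]
          calc Real.sqrt (s + h ^ 2 - r) ≤ Real.sqrt (h ^ 2) := Real.sqrt_le_sqrt h1
            _ = h := by rw [Real.sqrt_sq hh.le]
            _ ≤ ε / 2 := hhe
    _ ≤ ∫⁻ s in Set.Icc (r - h ^ 2) r, Lf C x₀ ε z (s + h ^ 2 - r) :=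
        lintegral_mono' (Measure.restrict_mono Set.Ioo_subset_Icc_self le_rfl) le_rfl

lemma Lf_ne_top (C x₀ ε : ℝ) (hC : 0 < C) (z t : ℝ) : Lf C x₀ ε z t ≠ ⊤ :=
  ((Lf_le C x₀ ε hC z t).trans_lt ENNReal.ofReal_lt_top).ne

lemma Af_ne_top (C t₀ x₀ ε h : ℝ) (hC : 0 < C) (z r : ℝ) : Af C t₀ x₀ ε h z r ≠ ⊤ :=
  ((Af_le C t₀ x₀ ε h hC z r).trans_lt
    (ENNReal.mul_lt_top ENNReal.ofReal_lt_top ENNReal.ofReal_lt_top)).ne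

lemma integral_eq_Lf (C x₀ ε : ℝ) (z t : ℝ) :
    ∫ y in Set.Ioo (x₀ - ε) (x₀ + ε), GammaKer1 C (y - z) t = (Lf C x₀ ε z t).toReal := by
  unfold Lf
  rw [integral_eq_lintegral_of_nonneg_ae
    (Filter.Eventually.of_forall fun y => gamma_nonneg C (y - z) t)
    (((gamma_measurable C).comp (by fun_prop : Measurable fun y : ℝ => (y - z, t))).aestronglyMeasurable)]

lemma Atilde_eq (C t₀ x₀ ε h : ℝ) (hC : 0 < C) (z r : ℝ) :
    Atilde1 C t₀ x₀ ε h z r = (Af C t₀ x₀ ε h z r).toReal := by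
  unfold Atilde1 Af
  simp_rw [integral_eq_Lf C x₀ ε z]
  have hm : Measurable fun s : ℝ => (Lf C x₀ ε z (s + h ^ 2 - r)).toReal :=
    ENNReal.measurable_toReal.comp ((Lf_measurable C x₀ ε).comp
      (by fun_prop : Measurable fun s : ℝ => (z, s + h ^ 2 - r)))
  rw [integral_eq_lintegral_of_nonneg_ae
    (Filter.Eventually.of_forall fun s => ENNReal.toReal_nonneg)
    hm.aestronglyMeasurable]
  congr 1
  exact lintegral_congr fun s => ENNReal.ofReal_toReal (Lf_ne_top C x₀ ε hC z _)

lemma Af_sq_measurable (C t₀ x₀ ε h : ℝ) :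
    Measurable fun p : ℝ × ℝ => (Af C t₀ x₀ ε h p.2 p.1) ^ 2 :=
  ((Af_measurable C t₀ x₀ ε h).comp
    (by fun_prop : Measurable fun p : ℝ × ℝ => (p.2, p.1))).pow_const 2

lemma intz_eq (C t₀ x₀ ε h : ℝ) (hC : 0 < C) (r : ℝ) :
    ∫ z : ℝ, (Atilde1 C t₀ x₀ ε h z r) ^ 2 = (∫⁻ z : ℝ, (Af C t₀ x₀ ε h z r) ^ 2).toReal := by
  simp_rw [Atilde_eq C t₀ x₀ ε h hC]
  have hm : Measurable fun z : ℝ => (Af C t₀ x₀ ε h z r).toReal ^ 2 :=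
    (ENNReal.measurable_toReal.comp ((Af_measurable C t₀ x₀ ε h).comp
      (by fun_prop : Measurable fun z : ℝ => (z, r)))).pow_const 2
  rw [integral_eq_lintegral_of_nonneg_ae
    (Filter.Eventually.of_forall fun z => sq_nonneg _)
    hm.aestronglyMeasurable]
  congr 1
  apply lintegral_congr fun z => ?_
  rw [← ENNReal.toReal_pow, ENNReal.ofReal_toReal]
  exact ENNReal.pow_ne_top (Af_ne_top C t₀ x₀ ε h hC z r)

lemma msqHat_eq (C t₀ x₀ ε h : ℝ) (hC : 0 < C) (hε : 0 ≤ ε) :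
    msqHat C t₀ x₀ ε h
      = (∫⁻ r in Set.Icc t₀ (t₀ + ε + h ^ 2),
          ∫⁻ z : ℝ, (Af C t₀ x₀ ε h z r) ^ 2).toReal / h ^ 4 := by
  unfold msqHat
  congr 1
  simp_rw [intz_eq C t₀ x₀ ε h hC]
  have hm : Measurable fun r : ℝ => (∫⁻ z : ℝ, (Af C t₀ x₀ ε h z r) ^ 2).toReal :=
    ENNReal.measurable_toReal.comp
      (Measurable.lintegral_prod_right' (ν := volume) (Af_sq_measurable C t₀ x₀ ε h))
  rw [integral_eq_lintegral_of_nonneg_ae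
    (Filter.Eventually.of_forall fun r => ENNReal.toReal_nonneg)
    hm.aestronglyMeasurable]
  congr 1
  apply lintegral_congr fun r => ?_
  apply ENNReal.ofReal_toReal
  exact ((lintegral_Af_sq_le C t₀ x₀ ε h hC hε r).trans_lt ENNReal.ofReal_lt_top).ne

/-- With `ε = h^ϱ`, there are `K ≥ 1` and `h₀ ∈ (0,1)`, depending
only on `ϱ` and `C`, such that `K⁻¹ h^{2ϱ} ≤ m̂²(h) ≤ K h^{2ϱ}` for all
`h ∈ (0,h₀)`. -/
theorem stmt_9 (C ϱ : ℝ) (hC : 0 < C) (hϱ : ϱ ∈ Set.Ioo (0 : ℝ) 1) :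
    ∃ K h₀ : ℝ, 1 ≤ K ∧ h₀ ∈ Set.Ioo (0 : ℝ) 1 ∧
      ∀ t₀ : ℝ, 0 ≤ t₀ → ∀ x₀ : ℝ, ∀ h ∈ Set.Ioo (0 : ℝ) h₀,
        K⁻¹ * h ^ (2 * ϱ) ≤ msqHat C t₀ x₀ (h ^ ϱ) h ∧
        msqHat C t₀ x₀ (h ^ ϱ) h ≤ K * h ^ (2 * ϱ) := by
  obtain ⟨hϱ0, hϱ1⟩ := hϱ
  have h1ϱ : 0 < 1 - ϱ := by linarith
  have hexp1 : (1:ℝ) ≤ Real.exp (2 / C) := Real.one_le_exp (by positivity)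
  refine ⟨4 * (Real.pi * C) + Real.exp (2 / C), (1/2 : ℝ) ^ ((1:ℝ)/(1 - ϱ)), ?_, ?_, ?_⟩
  · nlinarith [Real.pi_pos, hC]
  · exact ⟨Real.rpow_pos_of_pos (by norm_num) _,
      Real.rpow_lt_one (by norm_num) (by norm_num) (by positivity)⟩
  intro t₀ ht₀ x₀ h hh
  obtain ⟨hh0, hhlt⟩ := hh
  set K := 4 * (Real.pi * C) + Real.exp (2 / C) with hKdef
  set ε := h ^ ϱ with hεdef
  have hεpos : 0 < ε := Real.rpow_pos_of_pos hh0 _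
  have hlt1 : h < 1 :=
    hhlt.trans (Real.rpow_lt_one (by norm_num) (by norm_num) (by positivity))
  have hhalf : h ^ (1 - ϱ) < 1/2 := by
    calc h ^ (1 - ϱ) < ((1/2:ℝ) ^ ((1:ℝ)/(1 - ϱ))) ^ (1 - ϱ) :=
          Real.rpow_lt_rpow hh0.le hhlt h1ϱ
      _ = 1/2 := by
          rw [← Real.rpow_mul (by norm_num), one_div_mul_cancel h1ϱ.ne', Real.rpow_one]
  have hsplit : h ^ (1 - ϱ) * h ^ ϱ = h := by
    rw [← Real.rpow_add hh0]
    norm_num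
  have hrpos : 0 < h ^ (1 - ϱ) := Real.rpow_pos_of_pos hh0 _
  have hhe : h ≤ ε / 2 := by nlinarith [hεpos]
  have hh2e : h ^ 2 ≤ ε / 2 := by nlinarith [hh0, hlt1, hhe]
  have h4pos : (0:ℝ) < h ^ 4 := by positivity
  set c1 := 2 * Real.exp (-(1:ℝ)/C) with hc1def
  have hc1pos : 0 < c1 := by positivity
  set Itot := ∫⁻ r in Set.Icc t₀ (t₀ + ε + h ^ 2), ∫⁻ z : ℝ, (Af C t₀ x₀ ε h z r) ^ 2 with hIdef
  -- upper bound on Itot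
  have hub : Itot ≤ ENNReal.ofReal (4 * (Real.pi * C) * ε ^ 2 * h ^ 4) := by
    calc Itot ≤ ∫⁻ _ in Set.Icc t₀ (t₀ + ε + h ^ 2),
          ENNReal.ofReal (2 * (Real.pi * C) * ε * h ^ 4) :=
        setLIntegral_mono' measurableSet_Icc fun r _ =>
          lintegral_Af_sq_le C t₀ x₀ ε h hC hεpos.le r
      _ = ENNReal.ofReal (2 * (Real.pi * C) * ε * h ^ 4)
            * volume (Set.Icc t₀ (t₀ + ε + h ^ 2)) := setLIntegral_const _ _
      _ ≤ ENNReal.ofReal (2 * (Real.pi * C) * ε * h ^ 4) * ENNReal.ofReal (2 * ε) := by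
          rw [Real.volume_Icc]
          exact mul_le_mul_right (ENNReal.ofReal_le_ofReal (by linarith)) _
      _ = ENNReal.ofReal (4 * (Real.pi * C) * ε ^ 2 * h ^ 4) := by
          rw [← ENNReal.ofReal_mul (by positivity)]
          congr 1
          ring
  -- lower bound on Itot
  have hzint : ∀ r ∈ Set.Ioo (t₀ + h ^ 2) (t₀ + ε),
      ENNReal.ofReal ((c1 * h ^ 2) ^ 2 * ε) ≤ ∫⁻ z : ℝ, (Af C t₀ x₀ ε h z r) ^ 2 := by
    intro r hr
    calc ENNReal.ofReal ((c1 * h ^ 2) ^ 2 * ε)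
        = ENNReal.ofReal ((c1 * h ^ 2) ^ 2) * volume (Set.Ioo (x₀ - ε/2) (x₀ + ε/2)) := by
          rw [Real.volume_Ioo, ← ENNReal.ofReal_mul (by positivity)]
          congr 1
          ring
      _ = ∫⁻ _ in Set.Ioo (x₀ - ε/2) (x₀ + ε/2), ENNReal.ofReal ((c1 * h ^ 2) ^ 2) :=
          (setLIntegral_const _ _).symm
      _ ≤ ∫⁻ z in Set.Ioo (x₀ - ε/2) (x₀ + ε/2), (Af C t₀ x₀ ε h z r) ^ 2 := by
          apply setLIntegral_mono' measurableSet_Ioo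
          intro z hz
          have h1 := Af_ge C t₀ x₀ ε h hC hh0 hhe hz hr
          rw [← ENNReal.ofReal_mul (by positivity)] at h1
          calc ENNReal.ofReal ((c1 * h ^ 2) ^ 2)
              = (ENNReal.ofReal (c1 * h ^ 2)) ^ 2 :=
                ENNReal.ofReal_pow (by positivity) 2
            _ ≤ (Af C t₀ x₀ ε h z r) ^ 2 := by gcongr
      _ ≤ ∫⁻ z : ℝ, (Af C t₀ x₀ ε h z r) ^ 2 :=
          lintegral_mono' Measure.restrict_le_self le_rfl
  have hsub : Set.Ioo (t₀ + h ^ 2) (t₀ + ε) ⊆ Set.Icc t₀ (t₀ + ε + h ^ 2) := by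
    intro r hr
    simp only [Set.mem_Ioo, Set.mem_Icc] at *
    constructor <;> nlinarith [hr.1, hr.2, sq_nonneg h]
  have hlb : ENNReal.ofReal ((c1 * h ^ 2) ^ 2 * ε * (ε/2)) ≤ Itot := by
    calc ENNReal.ofReal ((c1 * h ^ 2) ^ 2 * ε * (ε/2))
        = ENNReal.ofReal ((c1 * h ^ 2) ^ 2 * ε) * ENNReal.ofReal (ε/2) :=
          ENNReal.ofReal_mul (by positivity)
      _ ≤ ENNReal.ofReal ((c1 * h ^ 2) ^ 2 * ε) * ENNReal.ofReal (ε - h ^ 2) :=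
          mul_le_mul_right (ENNReal.ofReal_le_ofReal (by linarith)) _
      _ = ∫⁻ _ in Set.Ioo (t₀ + h ^ 2) (t₀ + ε), ENNReal.ofReal ((c1 * h ^ 2) ^ 2 * ε) := by
          rw [setLIntegral_const, Real.volume_Ioo]
          congr 2
          ring
      _ ≤ ∫⁻ r in Set.Ioo (t₀ + h ^ 2) (t₀ + ε), ∫⁻ z : ℝ, (Af C t₀ x₀ ε h z r) ^ 2 :=
          setLIntegral_mono' measurableSet_Ioo hzint
      _ ≤ Itot := lintegral_mono' (Measure.restrict_mono hsub le_rfl) le_rfl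
  have hne : Itot ≠ ⊤ := (hub.trans_lt ENNReal.ofReal_lt_top).ne
  have hmsq : msqHat C t₀ x₀ ε h = Itot.toReal / h ^ 4 := msqHat_eq C t₀ x₀ ε h hC hεpos.le
  have htoRub : Itot.toReal ≤ 4 * (Real.pi * C) * ε ^ 2 * h ^ 4 :=
    ENNReal.toReal_le_of_le_ofReal (by positivity) hub
  have htoRlb : (c1 * h ^ 2) ^ 2 * ε * (ε/2) ≤ Itot.toReal :=
    (ENNReal.ofReal_le_iff_le_toReal hne).mp hlb
  have hε2 : ε ^ 2 = h ^ (2 * ϱ) := by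
    rw [hεdef, ← Real.rpow_natCast (h ^ ϱ) 2, ← Real.rpow_mul hh0.le]
    norm_num [mul_comm]
  have hup : msqHat C t₀ x₀ ε h ≤ 4 * (Real.pi * C) * h ^ (2 * ϱ) := by
    rw [hmsq, div_le_iff₀ h4pos, ← hε2]
    nlinarith [htoRub]
  have hlo : 2 * Real.exp (-(1:ℝ)/C) ^ 2 * h ^ (2 * ϱ) ≤ msqHat C t₀ x₀ ε h := by
    rw [hmsq, le_div_iff₀ h4pos, ← hε2]
    calc 2 * Real.exp (-(1:ℝ)/C) ^ 2 * ε ^ 2 * h ^ 4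
        = (c1 * h ^ 2) ^ 2 * ε * (ε/2) := by rw [hc1def]; ring
      _ ≤ Itot.toReal := htoRlb
  have hπC : 0 < Real.pi * C := mul_pos Real.pi_pos hC
  have hKpos : 0 < K := by rw [hKdef]; positivity
  have hexpK : Real.exp (2 / C) ≤ K := by rw [hKdef]; linarith
  have hexpsq : Real.exp (-(1:ℝ)/C) ^ 2 = (Real.exp (2 / C))⁻¹ := by
    rw [sq, ← Real.exp_add, show (-(1:ℝ)/C + -(1:ℝ)/C) = -(2/C) by ring, Real.exp_neg]
  constructor
  · refine le_trans ?_ hlo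
    apply mul_le_mul_of_nonneg_right _ (Real.rpow_nonneg hh0.le _)
    rw [hexpsq]
    have h1 : K⁻¹ ≤ (Real.exp (2 / C))⁻¹ := inv_anti₀ (Real.exp_pos _) hexpK
    have h2 : 0 < (Real.exp (2 / C))⁻¹ := by positivity
    linarith
  · refine hup.trans ?_
    apply mul_le_mul_of_nonneg_right _ (Real.rpow_nonneg hh0.le _)
    rw [hKdef]
    nlinarith [Real.exp_pos (2 / C)]
end

section
/- Fix an integer d ≥ 1 and β ∈ (0,d). There exists a constant K, depending only on d and β, such that for all ε ∈ (0,1], all 0 < t₂ ≤ t₁ ≤ ε², and all a₁, a₂ ∈ ℝ^d, (t₁ t₂)^{−1} ∫_{ℝ^d} ∫_{ℝ^d} exp(−‖z₁−a₁‖²/(2t₁)) exp(−‖z₂−a₂‖²/(2t₂)) ‖z₁−z₂‖^{−β} dz₁ dz₂ ≤ K ε^{2d−2} t₁^{−(1+β)/2} t₂^{−1/2}. -/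
/-!
Bound the inner integral uniformly in `z₂`: split space at the ball of radius `√t₁` around `z₂`.
On the ball the Gaussian is at most `1` and the Riesz kernel `‖x‖ ^ (-β)` is integrable
(`β < d`), with integral `C t₁ ^ ((d - β) / 2)` by scaling; off the ball the kernel is at most
`t₁ ^ (-β / 2)` and the Gaussian integrates to `(2π t₁) ^ (d / 2)`. Integrating the resulting bound
`≲ t₁ ^ ((d - β) / 2)` against the second Gaussian (after Tonelli) contributes `(2π t₂) ^ (d / 2)`,
and the prefactor `(t₁ t₂)⁻¹` leaves `(t₁ t₂) ^ ((d - 1) / 2) ≤ ε ^ (2d - 2)` in front of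
`t₁ ^ (-(1 + β) / 2) t₂ ^ (-1 / 2)`.
-/

open MeasureTheory Metric Module
open scoped ENNReal

section SchurTest

variable {α β : Type*} [MeasurableSpace α] [MeasurableSpace β] {μ : Measure α} {ν : Measure β}
  [SFinite μ] [SFinite ν]

theorem integral_integral_mul_le_of_lintegral_le {f : α → ℝ} {g : β → ℝ} {K : α → β → ℝ}
    (hf : Measurable f) (hg : Measurable g) (hK : Measurable (Function.uncurry K))
    {A B : ℝ} (hA : 0 ≤ A) (hB : 0 ≤ B)
    (hfK : ∀ y, ∫⁻ x, ‖f x * K x y‖ₑ ∂μ ≤ ENNReal.ofReal A)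
    (hg_int : ∫⁻ y, ‖g y‖ₑ ∂ν ≤ ENNReal.ofReal B) :
    ∫ x, ∫ y, f x * g y * K x y ∂ν ∂μ ≤ A * B := by
  have hF : Measurable fun p : α × β => ‖f p.1 * g p.2 * K p.1 p.2‖ₑ :=
    ((hf.comp measurable_fst).mul (hg.comp measurable_snd)).mul hK |>.enorm
  have key : ‖∫ x, ∫ y, f x * g y * K x y ∂ν ∂μ‖ₑ ≤ ENNReal.ofReal (A * B) := calc
    _ ≤ ∫⁻ x, ‖∫ y, f x * g y * K x y ∂ν‖ₑ ∂μ := enorm_integral_le_lintegral_enorm _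
    _ ≤ ∫⁻ x, ∫⁻ y, ‖f x * g y * K x y‖ₑ ∂ν ∂μ :=
      lintegral_mono fun x => enorm_integral_le_lintegral_enorm _
    _ = ∫⁻ y, ∫⁻ x, ‖f x * g y * K x y‖ₑ ∂μ ∂ν := lintegral_lintegral_swap hF.aemeasurable
    _ = ∫⁻ y, ‖g y‖ₑ * ∫⁻ x, ‖f x * K x y‖ₑ ∂μ ∂ν := by
      congr with y
      rw [← lintegral_const_mul' _ _ enorm_ne_top]
      congr with x
      rw [← enorm_mul, mul_left_comm, mul_assoc]
    _ ≤ ∫⁻ y, ‖g y‖ₑ * ENNReal.ofReal A ∂ν := by gcongr with y; exact hfK y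
    _ = (∫⁻ y, ‖g y‖ₑ ∂ν) * ENNReal.ofReal A := lintegral_mul_const' _ _ ENNReal.ofReal_ne_top
    _ ≤ ENNReal.ofReal B * ENNReal.ofReal A := by gcongr
    _ = ENNReal.ofReal (A * B) := by rw [← ENNReal.ofReal_mul hB, mul_comm]
  calc _ ≤ ‖∫ x, ∫ y, f x * g y * K x y ∂ν ∂μ‖ := Real.le_norm_self _
    _ ≤ A * B := by
      rwa [← ENNReal.ofReal_le_ofReal_iff (by positivity), ofReal_norm]

end SchurTest

section RieszKernel

variable {E : Type*} [NormedAddCommGroup E] [NormedSpace ℝ E] [FiniteDimensional ℝ E]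
  [MeasurableSpace E] [BorelSpace E] (μ : Measure E) [μ.IsAddHaarMeasure]

theorem integrableOn_ball_rpow_neg_norm [Nontrivial E] {β r : ℝ} (hβ : β < finrank ℝ E)
    (hr : 0 < r) : IntegrableOn (fun x : E => ‖x‖ ^ (-β)) (ball 0 r) μ := by
  rw [integrableOn_fun_norm_addHaar μ (f := fun y => y ^ (-β))]
  have hpow : IntegrableOn (fun y : ℝ => y ^ ((finrank ℝ E : ℝ) - 1 - β)) (Set.Ioo 0 r) :=
    (intervalIntegral.integrableOn_Ioo_rpow_iff hr).2 (by linarith)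
  refine hpow.congr_fun (fun y hy => ?_) measurableSet_Ioo
  have hE : 1 ≤ finrank ℝ E := finrank_pos
  rw [smul_eq_mul, ← Real.rpow_natCast, ← Real.rpow_add hy.1, Nat.cast_sub hE]
  ring_nf

theorem setIntegral_ball_rpow_neg_norm (β : ℝ) {r : ℝ} (hr : 0 < r) :
    ∫ x in ball 0 r, ‖x‖ ^ (-β) ∂μ =
      r ^ ((finrank ℝ E : ℝ) - β) * ∫ x in ball (0 : E) 1, ‖x‖ ^ (-β) ∂μ := by
  have hscale := Measure.setIntegral_comp_smul_of_pos μ (fun x : E => ‖x‖ ^ (-β)) (ball 0 1) hr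
  simp only [norm_smul, Real.norm_of_nonneg hr.le, Real.mul_rpow hr.le (norm_nonneg _),
    integral_const_mul, smul_unitBall_of_pos hr, smul_eq_mul] at hscale
  rw [Real.rpow_sub hr, Real.rpow_natCast, div_eq_mul_inv, ← Real.rpow_neg hr.le, mul_assoc,
    hscale, mul_inv_cancel_left₀ (by positivity)]

end RieszKernel

section RieszSplit

variable {G : Type*} [NormedAddCommGroup G] [MeasurableSpace G] [BorelSpace G]
  (μ : Measure G) [μ.IsAddRightInvariant]

theorem lintegral_enorm_mul_rpow_neg_norm_sub_le {f : G → ℝ} (hf : ∀ x, ‖f x‖ ≤ 1)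
    {β R : ℝ} (hβ : 0 ≤ β) (hR : 0 < R) (z : G) :
    ∫⁻ x, ‖f x * ‖x - z‖ ^ (-β)‖ₑ ∂μ ≤
      ∫⁻ x in ball 0 R, ‖‖x‖ ^ (-β)‖ₑ ∂μ + ‖R ^ (-β)‖ₑ * ∫⁻ x, ‖f x‖ₑ ∂μ := by
  set k : G → ℝ≥0∞ := (ball 0 R).indicator fun y => ‖‖y‖ ^ (-β)‖ₑ
  have hpoint : ∀ x, ‖f x * ‖x - z‖ ^ (-β)‖ₑ ≤ k (x - z) + ‖R ^ (-β)‖ₑ * ‖f x‖ₑ := by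
    intro x
    by_cases hx : x - z ∈ ball 0 R
    · rw [show k (x - z) = _ from Set.indicator_of_mem hx _]
      refine le_add_right (enorm_le_iff_norm_le.2 ?_)
      rw [norm_mul]
      exact mul_le_of_le_one_left (norm_nonneg _) (hf x)
    · rw [show k (x - z) = 0 from Set.indicator_of_notMem hx _, zero_add, ← enorm_mul]
      refine enorm_le_iff_norm_le.2 ?_
      have hRx : R ≤ ‖x - z‖ := by simpa using hx
      rw [norm_mul, norm_mul, mul_comm]
      gcongr
      rw [Real.norm_of_nonneg (by positivity), Real.norm_of_nonneg (by positivity)]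
      exact Real.rpow_le_rpow_of_nonpos hR hRx (by linarith)
  have hk : Measurable k :=
    (measurable_norm.pow_const _).enorm.indicator measurableSet_ball
  calc ∫⁻ x, ‖f x * ‖x - z‖ ^ (-β)‖ₑ ∂μ
      ≤ ∫⁻ x, (k (x - z) + ‖R ^ (-β)‖ₑ * ‖f x‖ₑ) ∂μ := lintegral_mono hpoint
    _ = ∫⁻ x, k (x - z) ∂μ + ‖R ^ (-β)‖ₑ * ∫⁻ x, ‖f x‖ₑ ∂μ := by
      rw [lintegral_add_left (f := fun x => k (x - z)) (hk.comp (measurable_sub_const z)),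
        lintegral_const_mul' _ _ enorm_ne_top]
    _ = _ := by rw [lintegral_sub_right_eq_self, lintegral_indicator measurableSet_ball]

end RieszSplit

section Gaussian

variable {V : Type*} [NormedAddCommGroup V] [InnerProductSpace ℝ V] [FiniteDimensional ℝ V]
  [MeasurableSpace V] [BorelSpace V]

theorem integral_exp_neg_norm_sub_sq_div {t : ℝ} (ht : 0 < t) (a : V) :
    ∫ z, Real.exp (-‖z - a‖ ^ 2 / (2 * t)) = (2 * Real.pi * t) ^ (finrank ℝ V / 2 : ℝ) := by
  have hb : 0 < (2 * t)⁻¹ := by positivity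
  simp_rw [neg_div, div_eq_inv_mul, ← neg_mul]
  rw [integral_sub_right_eq_self (fun z => Real.exp (-(2 * t)⁻¹ * ‖z‖ ^ 2)),
    GaussianFourier.integral_rexp_neg_mul_sq_norm hb, div_inv_eq_mul]
  ring_nf

theorem lintegral_enorm_exp_neg_norm_sub_sq_div {t : ℝ} (ht : 0 < t) (a : V) :
    ∫⁻ z, ‖Real.exp (-‖z - a‖ ^ 2 / (2 * t))‖ₑ =
      ENNReal.ofReal ((2 * Real.pi * t) ^ (finrank ℝ V / 2 : ℝ)) := by
  have hint : Integrable fun z : V => Real.exp (-‖z - a‖ ^ 2 / (2 * t)) :=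
    .of_integral_ne_zero (by rw [integral_exp_neg_norm_sub_sq_div ht]; positivity)
  simp_rw [← ofReal_integral_norm_eq_lintegral_enorm hint, Real.norm_of_nonneg (Real.exp_nonneg _),
    integral_exp_neg_norm_sub_sq_div ht]

theorem lintegral_enorm_exp_mul_rpow_neg_norm_sub_le [Nontrivial V] {β : ℝ} (hβ0 : 0 ≤ β)
    (hβ : β < finrank ℝ V) {t : ℝ} (ht : 0 < t) (a z : V) :
    ∫⁻ x, ‖Real.exp (-‖x - a‖ ^ 2 / (2 * t)) * ‖x - z‖ ^ (-β)‖ₑ ≤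
      ENNReal.ofReal (((∫ x in ball (0 : V) 1, ‖x‖ ^ (-β)) +
        (2 * Real.pi) ^ (finrank ℝ V / 2 : ℝ)) * t ^ ((finrank ℝ V - β) / 2)) := by
  set C := ∫ x in ball (0 : V) 1, ‖x‖ ^ (-β)
  have hC : 0 ≤ C := setIntegral_nonneg measurableSet_ball fun x _ => by positivity
  set R := t ^ (1 / 2 : ℝ)
  have hR : 0 < R := by positivity
  have hRpow (s : ℝ) : R ^ s = t ^ (s / 2) := by
    rw [← Real.rpow_mul ht.le]
    ring_nf
  have hexp_le (x : V) : ‖Real.exp (-‖x - a‖ ^ 2 / (2 * t))‖ ≤ 1 := by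
    rw [Real.norm_of_nonneg (Real.exp_nonneg _), Real.exp_le_one_iff]
    exact div_nonpos_of_nonpos_of_nonneg (by nlinarith [norm_nonneg (x - a)]) (by positivity)
  have hball : ∫⁻ x in ball (0 : V) R, ‖‖x‖ ^ (-β)‖ₑ =
      ENNReal.ofReal (t ^ ((finrank ℝ V - β) / 2) * C) := by
    rw [← ofReal_integral_norm_eq_lintegral_enorm
      (integrableOn_ball_rpow_neg_norm volume hβ hR)]
    simp_rw [Real.norm_of_nonneg (Real.rpow_nonneg (norm_nonneg _) _)]
    rw [setIntegral_ball_rpow_neg_norm volume β hR, hRpow]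
  calc _ ≤ _ := lintegral_enorm_mul_rpow_neg_norm_sub_le volume hexp_le hβ0 hR z
    _ = ENNReal.ofReal (t ^ ((finrank ℝ V - β) / 2) * C) + ENNReal.ofReal (t ^ (-β / 2)) *
          ENNReal.ofReal ((2 * Real.pi * t) ^ (finrank ℝ V / 2 : ℝ)) := by
      rw [hball, lintegral_enorm_exp_neg_norm_sub_sq_div ht, hRpow,
        Real.enorm_of_nonneg (by positivity)]
    _ = _ := by
      rw [← ENNReal.ofReal_mul (by positivity), ← ENNReal.ofReal_add (by positivity)
        (by positivity), Real.mul_rpow (by positivity) ht.le, mul_left_comm, ← Real.rpow_add ht]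
      ring_nf

end Gaussian

theorem inv_mul_rpow_mul_rpow_le {n : ℕ} (hn : 1 ≤ n) (β : ℝ) {ε t₁ t₂ : ℝ} (hε : 0 ≤ ε)
    (ht₂ : 0 < t₂) (ht : t₂ ≤ t₁) (ht₁ : t₁ ≤ ε ^ 2) :
    (t₁ * t₂)⁻¹ * (t₁ ^ ((n - β) / 2) * t₂ ^ ((n : ℝ) / 2)) ≤
      ε ^ (2 * n - 2) * t₁ ^ (-(1 + β) / 2) * t₂ ^ (-(1 : ℝ) / 2) := by
  have ht₁0 : 0 < t₁ := ht₂.trans_le ht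
  have hn' : (1 : ℝ) ≤ n := by exact_mod_cast hn
  have hsplit : (t₁ * t₂)⁻¹ * (t₁ ^ ((n - β) / 2) * t₂ ^ ((n : ℝ) / 2)) =
      (t₁ * t₂) ^ (((n : ℝ) - 1) / 2) * t₁ ^ (-(1 + β) / 2) * t₂ ^ (-(1 : ℝ) / 2) := by
    calc _ = t₁ ^ ((n - β) / 2 + -1) * t₂ ^ ((n : ℝ) / 2 + -1) := by
          rw [Real.rpow_add ht₁0, Real.rpow_add ht₂, Real.rpow_neg_one, Real.rpow_neg_one, mul_inv]
          ring
      _ = _ := by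
          rw [show (n - β) / 2 + -1 = ((n : ℝ) - 1) / 2 + -(1 + β) / 2 by ring,
            show (n : ℝ) / 2 + -1 = ((n : ℝ) - 1) / 2 + -(1 : ℝ) / 2 by ring,
            Real.rpow_add ht₁0, Real.rpow_add ht₂, Real.mul_rpow ht₁0.le ht₂.le]
          ring
  have hprod : (t₁ * t₂) ^ (((n : ℝ) - 1) / 2) ≤ ε ^ (2 * n - 2) := calc
    _ ≤ (ε ^ 2 * ε ^ 2) ^ (((n : ℝ) - 1) / 2) := by
      gcongr
      exact ht.trans ht₁
    _ = ε ^ (2 * n - 2) := by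
      rw [← pow_add, ← Real.rpow_natCast, ← Real.rpow_mul hε, ← Real.rpow_natCast,
        Nat.cast_sub (by omega)]
      push_cast
      ring_nf
  rw [hsplit]
  gcongr

/-- the term `U₂`: there is `K` depending only on `d` and `β`
such that for all `ε ∈ (0,1]`, `0 < t₂ ≤ t₁ ≤ ε²` and `a₁, a₂ ∈ ℝ^d`,
`(t₁t₂)^{−1} ∫∫ e^{−‖z₁−a₁‖²/(2t₁)} e^{−‖z₂−a₂‖²/(2t₂)} ‖z₁−z₂‖^{−β} dz₁ dz₂
  ≤ K ε^{2d−2} t₁^{−(1+β)/2} t₂^{−1/2}`. -/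
theorem stmt_11 (d : ℕ) (hd : 1 ≤ d) (β : ℝ) (hβ0 : 0 < β) (hβd : β < d) :
    ∃ K : ℝ, 0 < K ∧ ∀ ε ∈ Set.Ioc (0 : ℝ) 1, ∀ t₁ t₂ : ℝ,
      0 < t₂ → t₂ ≤ t₁ → t₁ ≤ ε ^ 2 → ∀ a₁ a₂ : EuclideanSpace ℝ (Fin d),
        (t₁ * t₂)⁻¹ * (∫ z₁ : EuclideanSpace ℝ (Fin d), ∫ z₂ : EuclideanSpace ℝ (Fin d),
            Real.exp (-‖z₁ - a₁‖ ^ 2 / (2 * t₁)) * Real.exp (-‖z₂ - a₂‖ ^ 2 / (2 * t₂)) *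
              ‖z₁ - z₂‖ ^ (-β)) ≤
          K * ε ^ (2 * d - 2) * t₁ ^ (-(1 + β) / 2) * t₂ ^ (-(1 : ℝ) / 2) := by
  have : Nontrivial (EuclideanSpace ℝ (Fin d)) :=
    finrank_pos_iff (R := ℝ) |>.1 (by rw [finrank_euclideanSpace_fin]; omega)
  set C := ∫ x in ball (0 : EuclideanSpace ℝ (Fin d)) 1, ‖x‖ ^ (-β)
  have hC : 0 ≤ C := setIntegral_nonneg measurableSet_ball fun x _ => by positivity
  set P := (2 * Real.pi) ^ (d / 2 : ℝ)
  refine ⟨(C + P) * P, by positivity, ?_⟩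
  rintro ε ⟨hε, -⟩ t₁ t₂ ht₂ ht ht₁ a₁ a₂
  have ht₁0 : 0 < t₁ := ht₂.trans_le ht
  have hβd' : β < finrank ℝ (EuclideanSpace ℝ (Fin d)) := by simpa using hβd
  have hdouble := integral_integral_mul_le_of_lintegral_le (μ := volume) (ν := volume)
    (K := fun z₁ z₂ : EuclideanSpace ℝ (Fin d) => ‖z₁ - z₂‖ ^ (-β)) (by fun_prop) (by fun_prop)
    (by fun_prop) (by positivity) (by positivity)
    (fun z => lintegral_enorm_exp_mul_rpow_neg_norm_sub_le hβ0.le hβd' ht₁0 a₁ z)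
    (lintegral_enorm_exp_neg_norm_sub_sq_div ht₂ a₂).le
  simp only [finrank_euclideanSpace_fin] at hdouble
  calc _ ≤ (t₁ * t₂)⁻¹ * ((C + P) * t₁ ^ ((d - β) / 2) * (2 * Real.pi * t₂) ^ (d / 2 : ℝ)) :=
        mul_le_mul_of_nonneg_left hdouble (by positivity)
    _ = (C + P) * P * ((t₁ * t₂)⁻¹ * (t₁ ^ ((d - β) / 2) * t₂ ^ ((d : ℝ) / 2))) := by
        rw [Real.mul_rpow (by positivity) ht₂.le]
        ring
    _ ≤ (C + P) * P * (ε ^ (2 * d - 2) * t₁ ^ (-(1 + β) / 2) * t₂ ^ (-(1 : ℝ) / 2)) :=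
        mul_le_mul_of_nonneg_left (inv_mul_rpow_mul_rpow_le hd β hε.le ht₂ ht ht₁)
          (by positivity)
    _ = _ := by ring
end

section
/- Fix an integer d ≥ 1, t > 0, z ∈ ℝ^d, C > 0, and a unit vector v ∈ ℝ^d. Let g : ℝ^d → ℝ be twice continuously differentiable with |vᵀ D²g(y) v| ≤ C t^{−(d+2)/2} exp(−‖y−z‖²/(Ct)) for all y ∈ ℝ^d, and suppose that ∫_{ℝ^d} vᵀ D²g(y) v dy = 0. Then there exist constants C', c' > 0, depending only on C and d, such that for every center c ∈ ℝ^d and radius ε > 0, |∫_{B(c,ε)} vᵀ D²g(y) v dy| ≤ C' t^{−1} exp(−c' (‖z−c‖ − ε)² / t). -/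
/-!
Split the Gaussian weight as `exp (-2b‖y - z‖²) ≤ exp (-b R²) · exp (-b‖y - z‖²)` on any set at
distance at least `R` from `z`: the first factor gives the decay, the second integrates to
`(π / b) ^ (d / 2)`. If `z` lies outside `B(c, ε)` this applies to the ball itself, with
`R = ‖z - c‖ - ε`. If `z` lies inside, the vanishing of the total integral trades the ball for
its complement, which is at distance `ε - ‖z - c‖` from `z`.
-/

open MeasureTheory Real

section GaussianBound

variable {E : Type*} [NormedAddCommGroup E] [InnerProductSpace ℝ E] [FiniteDimensional ℝ E]
  [MeasurableSpace E] [BorelSpace E]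

lemma integrable_rexp_neg_mul_sq_norm_sub {b : ℝ} (hb : 0 < b) (z : E) :
    Integrable fun x : E => rexp (-b * ‖x - z‖ ^ 2) := by
  have h := (GaussianFourier.integrable_cexp_neg_mul_sq_norm_add (V := E) (b := (b : ℂ))
    (by simpa using hb) 0 0).norm
  refine Integrable.comp_sub_right (f := fun x : E => rexp (-b * ‖x‖ ^ 2))
    (h.congr (.of_forall fun x => ?_)) z
  simp [Complex.norm_exp, ← Complex.ofReal_pow]

lemma integral_rexp_neg_mul_sq_norm_sub {b : ℝ} (hb : 0 < b) (z : E) :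
    ∫ x : E, rexp (-b * ‖x - z‖ ^ 2) = (π / b) ^ (Module.finrank ℝ E / 2 : ℝ) := by
  rw [integral_sub_right_eq_self (fun x : E => rexp (-b * ‖x‖ ^ 2)) z,
    GaussianFourier.integral_rexp_neg_mul_sq_norm hb]

variable {f : E → ℝ} {A b : ℝ} {z : E}

lemma integrable_of_abs_le_mul_rexp (hf : AEStronglyMeasurable f) (hb : 0 < b)
    (hfb : ∀ y, |f y| ≤ A * rexp (-b * ‖y - z‖ ^ 2)) : Integrable f :=
  ((integrable_rexp_neg_mul_sq_norm_sub hb z).const_mul A).mono' hf (.of_forall hfb)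

lemma abs_setIntegral_le_of_abs_le_mul_rexp (hf : Integrable f) (hb : 0 < b)
    (hfb : ∀ y, |f y| ≤ A * rexp (-(2 * b) * ‖y - z‖ ^ 2)) {S : Set E} (hS : MeasurableSet S)
    {R : ℝ} (hR : 0 ≤ R) (hSR : ∀ y ∈ S, R ≤ ‖y - z‖) :
    |∫ y in S, f y| ≤ A * rexp (-b * R ^ 2) * (π / b) ^ (Module.finrank ℝ E / 2 : ℝ) := by
  have hA : 0 ≤ A := nonneg_of_mul_nonneg_left ((abs_nonneg _).trans (hfb z)) (exp_pos _)
  set G := fun y => A * rexp (-b * R ^ 2) * rexp (-b * ‖y - z‖ ^ 2)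
  have hG : Integrable G := (integrable_rexp_neg_mul_sq_norm_sub hb z).const_mul _
  have hfG : ∀ y ∈ S, |f y| ≤ G y := fun y hy => by
    have hRy : R ^ 2 ≤ ‖y - z‖ ^ 2 := pow_le_pow_left₀ hR (hSR y hy) 2
    calc |f y| ≤ A * rexp (-(2 * b) * ‖y - z‖ ^ 2) := hfb y
      _ = A * (rexp (-b * ‖y - z‖ ^ 2) * rexp (-b * ‖y - z‖ ^ 2)) := by rw [← exp_add]; ring_nf
      _ ≤ A * rexp (-b * R ^ 2) * rexp (-b * ‖y - z‖ ^ 2) := by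
        rw [mul_assoc A]
        gcongr A * (rexp ?_ * _)
        nlinarith
  calc |∫ y in S, f y| ≤ ∫ y in S, |f y| := abs_integral_le_integral_abs
    _ ≤ ∫ y in S, G y := setIntegral_mono_on hf.abs.integrableOn hG.integrableOn hS hfG
    _ ≤ ∫ y, G y := setIntegral_le_integral hG (.of_forall fun y => by positivity)
    _ = _ := by rw [integral_const_mul, integral_rexp_neg_mul_sq_norm_sub hb]

lemma abs_setIntegral_ball_le_of_integral_eq_zero (hf : Integrable f) (hb : 0 < b)
    (hfb : ∀ y, |f y| ≤ A * rexp (-(2 * b) * ‖y - z‖ ^ 2)) (hf0 : ∫ y, f y = 0)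
    (c : E) (ε : ℝ) :
    |∫ y in Metric.ball c ε, f y| ≤
      A * rexp (-b * (‖z - c‖ - ε) ^ 2) * (π / b) ^ (Module.finrank ℝ E / 2 : ℝ) := by
  rcases le_or_gt ε ‖z - c‖ with hout | hin
  · refine abs_setIntegral_le_of_abs_le_mul_rexp hf hb hfb measurableSet_ball
      (sub_nonneg.2 hout) fun y hy => ?_
    have := norm_sub_le_norm_sub_add_norm_sub z y c
    rw [Metric.mem_ball, dist_eq_norm] at hy
    rw [norm_sub_rev z y] at this
    linarith
  · have hcompl : ∫ y in Metric.ball c ε, f y = -∫ y in (Metric.ball c ε)ᶜ, f y := by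
      linarith [integral_add_compl (measurableSet_ball (x := c) (ε := ε)) hf]
    rw [hcompl, abs_neg, ← neg_sq, neg_sub]
    refine abs_setIntegral_le_of_abs_le_mul_rexp hf hb hfb measurableSet_ball.compl
      (sub_nonneg.2 hin.le) fun y hy => ?_
    have := norm_sub_le_norm_sub_add_norm_sub y z c
    rw [Set.mem_compl_iff, Metric.mem_ball, not_lt, dist_eq_norm] at hy
    linarith

end GaussianBound

theorem stmt_15_general (d : ℕ) (C : ℝ) (hC : 0 < C) :
    ∃ C' c' : ℝ, 0 < C' ∧ 0 < c' ∧
      ∀ t : ℝ, 0 < t → ∀ z v : EuclideanSpace ℝ (Fin d), ‖v‖ = 1 →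
        ∀ g : EuclideanSpace ℝ (Fin d) → ℝ, ContDiff ℝ 2 g →
          (∀ y, |iteratedFDeriv ℝ 2 g y ![v, v]| ≤
              C * t ^ (-((d : ℝ) + 2) / 2) * Real.exp (-‖y - z‖ ^ 2 / (C * t))) →
          (∫ y : EuclideanSpace ℝ (Fin d), iteratedFDeriv ℝ 2 g y ![v, v]) = 0 →
          ∀ (c : EuclideanSpace ℝ (Fin d)) (ε : ℝ), 0 < ε →
            |∫ y in Metric.ball c ε, iteratedFDeriv ℝ 2 g y ![v, v]| ≤
              C' * t⁻¹ * Real.exp (-c' * (‖z - c‖ - ε) ^ 2 / t) := by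
  refine ⟨C * (2 * π * C) ^ ((d : ℝ) / 2), (2 * C)⁻¹, by positivity, by positivity, ?_⟩
  intro t ht z v _ g hg hbound hzero c ε _
  have hb : 0 < (2 * C * t)⁻¹ := by positivity
  have hfb : ∀ y, |iteratedFDeriv ℝ 2 g y ![v, v]| ≤
      C * t ^ (-((d : ℝ) + 2) / 2) * rexp (-(2 * (2 * C * t)⁻¹) * ‖y - z‖ ^ 2) := fun y => by
    convert hbound y using 3
    field_simp
  have hf : Integrable fun y => iteratedFDeriv ℝ 2 g y ![v, v] :=
    integrable_of_abs_le_mul_rexp ((continuous_eval_const _).comp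
      (hg.continuous_iteratedFDeriv le_rfl)).aestronglyMeasurable (by positivity) hfb
  refine (abs_setIntegral_ball_le_of_integral_eq_zero hf hb hfb hzero c ε).trans_eq ?_
  have hπ : π / (2 * C * t)⁻¹ = 2 * π * C * t := by field_simp
  have ht_pow : t ^ (-((d : ℝ) + 2) / 2) * t ^ ((d : ℝ) / 2) = t⁻¹ := by
    rw [← rpow_add ht, ← rpow_neg_one]
    ring_nf
  rw [finrank_euclideanSpace_fin, hπ, mul_rpow (by positivity) ht.le, ← ht_pow]
  field_simp

/-- If `g` is `C²` with `|vᵀ D²g(y) v| ≤ C t^{−(d+2)/2}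
exp(−‖y−z‖²/(Ct))` for a unit vector `v`, and `∫_{ℝ^d} vᵀ D²g(y) v dy = 0`,
then there are `C', c' > 0` depending only on `C` and `d` such that for every
ball `B(c,ε)`,
`|∫_{B(c,ε)} vᵀ D²g(y) v dy| ≤ C' t^{−1} exp(−c'(‖z−c‖−ε)²/t)`. -/
theorem stmt_15 (d : ℕ) (hd : 1 ≤ d) (C : ℝ) (hC : 0 < C) :
    ∃ C' c' : ℝ, 0 < C' ∧ 0 < c' ∧
      ∀ t : ℝ, 0 < t → ∀ z v : EuclideanSpace ℝ (Fin d), ‖v‖ = 1 →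
        ∀ g : EuclideanSpace ℝ (Fin d) → ℝ, ContDiff ℝ 2 g →
          (∀ y, |iteratedFDeriv ℝ 2 g y ![v, v]| ≤
              C * t ^ (-((d : ℝ) + 2) / 2) * Real.exp (-‖y - z‖ ^ 2 / (C * t))) →
          (∫ y : EuclideanSpace ℝ (Fin d), iteratedFDeriv ℝ 2 g y ![v, v]) = 0 →
          ∀ (c : EuclideanSpace ℝ (Fin d)) (ε : ℝ), 0 < ε →
            |∫ y in Metric.ball c ε, iteratedFDeriv ℝ 2 g y ![v, v]| ≤
              C' * t⁻¹ * Real.exp (-c' * (‖z - c‖ - ε) ^ 2 / t) :=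
  stmt_15_general d C hC
end
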